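/- arXiv:math/9411208 — 10 statements merged into one kernel-verified Lean document; each statement's English description precedes it below -/
import Mathlib

section
/- For every partially ordered set P: P is a semi-Cohen poset if and only if the regular open algebra RO(P) is a semi-Cohen complete Boolean algebra. -/
universe u v

/-- Two elements of a preordered set are compatible if they have a common lower bound. -/
def PosetCompat {P : Type u} [Preorder P] (p q : P) : Prop :=
  ∃ r, r ≤ p ∧ r ≤ q

/-- `R` is a regular subposet of `P`: for every `p₀ ∈ P` there is `p₁ ∈ R` such that every
`p₂ ∈ R` with `p₂ ≤ p₁` is compatible with `p₀`. -/
def IsRegularSubposet {P : Type u} [Preorder P] (R : Set P) : Prop :=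
  ∀ p₀ : P, ∃ p₁ ∈ R, ∀ p₂ ∈ R, p₂ ≤ p₁ → PosetCompat p₂ p₀

/-- `C` is a club (closed unbounded) collection of countable subsets of `X`: all members are
countable, `C` is closed under unions of nonempty countable `⊆`-increasing chains, and every
countable subset of `X` is contained in some member of `C`. -/
def IsClubIn (X : Type u) (C : Set (Set X)) : Prop :=
  (∀ S ∈ C, S.Countable) ∧
  (∀ 𝒞 : Set (Set X), 𝒞.Nonempty → 𝒞.Countable → 𝒞 ⊆ C → IsChain (· ⊆ ·) 𝒞 → ⋃₀ 𝒞 ∈ C) ∧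
  (∀ S : Set X, S.Countable → ∃ T ∈ C, S ⊆ T)

/-- A poset `P` is semi-Cohen if the collection of its countable regular subposets contains a
club collection of countable subsets of `P`. -/
def SemiCohenPoset (P : Type u) [Preorder P] : Prop :=
  ∃ C : Set (Set P), IsClubIn P C ∧ ∀ R ∈ C, IsRegularSubposet R

/-- A Boolean subalgebra (as a subset). -/
def IsBoolSubalgebra {B : Type u} [BooleanAlgebra B] (A : Set B) : Prop :=
  ⊥ ∈ A ∧ ⊤ ∈ A ∧ (∀ x ∈ A, ∀ y ∈ A, x ⊔ y ∈ A) ∧ (∀ x ∈ A, ∀ y ∈ A, x ⊓ y ∈ A) ∧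
    ∀ x ∈ A, xᶜ ∈ A

/-- `S` is an antichain contained in `A`: a set of pairwise disjoint nonzero elements. -/
def IsBAAntichainIn {B : Type u} [BooleanAlgebra B] (A S : Set B) : Prop :=
  S ⊆ A ∧ ⊥ ∉ S ∧ S.Pairwise fun x y => x ⊓ y = ⊥

/-- `S` is a maximal antichain of `A`. -/
def IsMaxBAAntichainIn {B : Type u} [BooleanAlgebra B] (A S : Set B) : Prop :=
  IsBAAntichainIn A S ∧ ∀ T : Set B, IsBAAntichainIn A T → S ⊆ T → S = T

/-- `A` is a regular subalgebra of `B`: a Boolean subalgebra every maximal antichain of which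
is a maximal antichain of `B`. -/
def IsRegularSubalgebra {B : Type u} [BooleanAlgebra B] (A : Set B) : Prop :=
  IsBoolSubalgebra A ∧ ∀ S : Set B, IsMaxBAAntichainIn A S → IsMaxBAAntichainIn Set.univ S

/-- A complete Boolean algebra is semi-Cohen if the collection of its countable regular
subalgebras contains a club collection of countable subsets. -/
def SemiCohenBA (B : Type u) [CompleteBooleanAlgebra B] : Prop :=
  ∃ C : Set (Set B), IsClubIn B C ∧ ∀ A ∈ C, IsRegularSubalgebra A

section RegularCBA

variable {α : Type*} [Order.Frame α]

/-- The complete lattice structure on regular elements of a frame. -/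
noncomputable def Heyting.Regular.completeLattice : CompleteLattice (Heyting.Regular α) :=
  Heyting.Regular.gi.liftCompleteLattice

/-- The regular elements of a frame form a complete Boolean algebra. -/
noncomputable instance Heyting.Regular.instCompleteBooleanAlgebra :
    CompleteBooleanAlgebra (Heyting.Regular α) := by
  letI cl : CompleteLattice (Heyting.Regular α) := Heyting.Regular.completeLattice
  exact { (inferInstance : BooleanAlgebra (Heyting.Regular α)), cl with }

end RegularCBA

/-- The topology on a preordered set generated by the cones `{q | q ≤ p}`. -/
def conesTopology (P : Type*) [Preorder P] : TopologicalSpace P :=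
  TopologicalSpace.generateFrom { s : Set P | ∃ p : P, s = { q : P | q ≤ p } }

/-- The regular open algebra `RO(P)` of a preordered set `P`: the complete Boolean algebra
of regular open subsets of `P` in the topology generated by the cones. -/
def RO (P : Type u) [Preorder P] : Type u :=
  letI := conesTopology P
  Heyting.Regular (TopologicalSpace.Opens P)

noncomputable instance (P : Type u) [Preorder P] : CompleteBooleanAlgebra (RO P) :=
  letI := conesTopology P
  (inferInstance : CompleteBooleanAlgebra (Heyting.Regular (TopologicalSpace.Opens P)))

/-! The map `p ↦ ¬¬(cone of p)` embeds `P` densely into `RO(P)`, preserving order and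
(in)compatibility. Call countable `R ⊆ P` and `A ⊆ RO(P)` matched if `A` contains the image of
`R` and every nonzero `a ∈ A` lies above the image of some element of `R`. For matched pairs,
regularity of `A` gives regularity of `R`, and regularity of `R` (closed under common lower
bounds) gives regularity of the Boolean subalgebra `A`. By Kueker's theorem a club contains all
countable sets closed under some countable-valued finitary operation, and closing a countable
set on one side under such operations, alternately on both sides, produces matched pairs; so a
club of regular sets on one side yields one on the other. -/

namespace Club

variable {X Y : Type*}

def ClosedUnder (H : List X → Set X) (S : Set X) : Prop :=
  ∀ l : List X, (∀ x ∈ l, x ∈ S) → H l ⊆ S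

lemma ClosedUnder.left {H₁ H₂ : List X → Set X} {S : Set X} (h : ClosedUnder (H₁ ⊔ H₂) S) :
    ClosedUnder H₁ S :=
  fun l hl => Set.subset_union_left.trans (h l hl)

lemma ClosedUnder.right {H₁ H₂ : List X → Set X} {S : Set X} (h : ClosedUnder (H₁ ⊔ H₂) S) :
    ClosedUnder H₂ S :=
  fun l hl => Set.subset_union_right.trans (h l hl)

lemma ClosedUnder.pair_subset {H : List X → Set X} {S : Set X} (h : ClosedUnder H S)
    {x y : X} (hx : x ∈ S) (hy : y ∈ S) : H [x, y] ⊆ S :=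
  h _ (by simp [hx, hy])

lemma ClosedUnder.sUnion {H : List X → Set X} {𝒞 : Set (Set X)} (hne : 𝒞.Nonempty)
    (hdir : DirectedOn (· ⊆ ·) 𝒞) (hcl : ∀ S ∈ 𝒞, ClosedUnder H S) : ClosedUnder H (⋃₀ 𝒞) := by
  intro l hl
  obtain ⟨S, hS, hlS⟩ :=
    hdir.exists_mem_subset_of_finite_of_subset_sUnion hne l.finite_toSet hl
  exact (hcl S hS l hlS).trans (Set.subset_sUnion_of_mem hS)

lemma countable_setOf_forall_mem_list {S : Set X} (hS : S.Countable) :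
    {l : List X | ∀ x ∈ l, x ∈ S}.Countable := by
  have := hS.to_subtype
  refine (Set.countable_range (List.map ((↑) : S → X))).mono ?_
  intro l hl
  lift l to List S using hl
  exact ⟨l, rfl⟩

def closureStep (H : List X → Set X) (S : Set X) : Set X :=
  S ∪ ⋃ l ∈ {l : List X | ∀ x ∈ l, x ∈ S}, H l

def closure (H : List X → Set X) (S : Set X) : Set X :=
  ⋃ n, (closureStep H)^[n] S

variable {H : List X → Set X}

lemma subset_closure (S : Set X) : S ⊆ closure H S :=
  Set.subset_iUnion (fun n => (closureStep H)^[n] S) 0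

lemma closureStep_mono : Monotone (closureStep H) := fun _ _ hST =>
  Set.union_subset_union hST <| Set.biUnion_subset_biUnion_left fun _ hl x hx => hST (hl x hx)

lemma closure_mono {S T : Set X} (hST : S ⊆ T) : closure H S ⊆ closure H T :=
  Set.iUnion_mono fun n => (closureStep_mono.iterate n) hST

lemma closedUnder_closure (S : Set X) : ClosedUnder H (closure H S) := by
  have hmono : Monotone fun n => (closureStep H)^[n] S :=
    monotone_nat_of_le_succ fun n => by
      rw [Function.iterate_succ_apply']
      exact Set.subset_union_left
  intro l hl
  obtain ⟨_, ⟨n, rfl⟩, hln⟩ :=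
    hmono.directed_le.directedOn_range.exists_mem_subset_of_finite_of_subset_sUnion
      (Set.range_nonempty _) l.finite_toSet hl
  refine subset_trans ?_ (Set.subset_iUnion _ (n + 1))
  rw [Function.iterate_succ_apply']
  exact Set.subset_union_of_subset_right (Set.subset_biUnion_of_mem (u := H) hln) _

lemma countable_closure (hH : ∀ l, (H l).Countable) {S : Set X} (hS : S.Countable) :
    (closure H S).Countable := by
  refine Set.countable_iUnion fun n => ?_
  induction n with
  | zero => exact hS
  | succ n ih =>
    rw [Function.iterate_succ_apply']
    exact ih.union ((countable_setOf_forall_mem_list ih).biUnion fun l _ => hH l)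

lemma isClubIn_closedUnder (hH : ∀ l, (H l).Countable) :
    IsClubIn X {S | S.Countable ∧ ClosedUnder H S} :=
  ⟨fun _ hS => hS.1,
    fun _ hne hcount hsub hchain => ⟨hcount.sUnion fun _ hS => (hsub hS).1,
      ClosedUnder.sUnion hne hchain.directedOn fun _ hS => (hsub hS).2⟩,
    fun S hS => ⟨closure H S, ⟨countable_closure hH hS, closedUnder_closure S⟩, subset_closure S⟩⟩

section Kueker

variable {C : Set (Set X)}

noncomputable def clubChain (hC : IsClubIn X C) : List X → C
  | [] => ⟨_, (hC.2.2 ∅ Set.countable_empty).choose_spec.1⟩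
  | x :: l =>
    let T := clubChain hC l
    ⟨_, (hC.2.2 (insert x T.1) ((hC.1 T.1 T.2).insert x)).choose_spec.1⟩

lemma insert_subset_clubChain (hC : IsClubIn X C) (x : X) (l : List X) :
    insert x (clubChain hC l : Set X) ⊆ clubChain hC (x :: l) :=
  (hC.2.2 _ ((hC.1 _ (clubChain hC l).2).insert x)).choose_spec.2

lemma mem_of_closedUnder_clubChain (hC : IsClubIn X C) {S : Set X} (hS : S.Countable)
    (hcl : ClosedUnder (fun l => clubChain hC l) S) : S ∈ C := by
  rcases S.eq_empty_or_nonempty with rfl | hne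
  · rw [← Set.subset_empty_iff.1 (hcl [] (by simp))]
    exact (clubChain hC []).2
  obtain ⟨f, rfl⟩ := hS.exists_eq_range hne
  let l : ℕ → List X := fun n => Nat.rec [] (fun k l => f k :: l) n
  have hl : ∀ n, ∀ x ∈ l n, x ∈ Set.range f := by
    intro n
    induction n with
    | zero => simp [l]
    | succ n ih => simpa [l] using ih
  have hmono : Monotone fun n => (clubChain hC (l n) : Set X) :=
    monotone_nat_of_le_succ fun n => (Set.subset_insert _ _).trans (insert_subset_clubChain hC _ _)
  have hunion : ⋃₀ Set.range (fun n => (clubChain hC (l n) : Set X)) = Set.range f := by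
    refine subset_antisymm (Set.sUnion_subset ?_) ?_
    · rintro _ ⟨n, rfl⟩
      exact hcl (l n) (hl n)
    · rintro _ ⟨n, rfl⟩
      exact ⟨_, ⟨n + 1, rfl⟩, insert_subset_clubChain hC (f n) (l n) (Set.mem_insert _ _)⟩
  rw [← hunion]
  exact hC.2.1 _ (Set.range_nonempty _) (Set.countable_range _)
    (by rintro _ ⟨n, rfl⟩; exact (clubChain hC (l n)).2) hmono.isChain_range

end Kueker

def choiceSet (p : X → Prop) : Set X :=
  Set.range fun h : ∃ x, p x => h.choose

lemma countable_choiceSet (p : X → Prop) : (choiceSet p).Countable :=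
  Set.countable_range _

lemma of_mem_choiceSet {p : X → Prop} {x : X} (hx : x ∈ choiceSet p) : p x := by
  obtain ⟨h, rfl⟩ := hx
  exact h.choose_spec

lemma choiceSet_nonempty {p : X → Prop} (h : ∃ x, p x) : (choiceSet p).Nonempty :=
  ⟨_, h, rfl⟩

def transferOp (H : List X → Set X) (f : X → Set Y) (g : Y → Set X) (l : List Y) : Set Y :=
  ⋃ x ∈ closure H (⋃ y ∈ l, g y), f x

section Transfer

variable {f : X → Set Y} {g : Y → Set X}

lemma countable_biUnion_list {l : List Y} (hg : ∀ y, (g y).Countable) :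
    (⋃ y ∈ l, g y).Countable :=
  l.finite_toSet.countable.biUnion fun y _ => hg y

lemma countable_transferOp (hH : ∀ l, (H l).Countable) (hf : ∀ x, (f x).Countable)
    (hg : ∀ y, (g y).Countable) (l : List Y) : (transferOp H f g l).Countable :=
  (countable_closure hH (countable_biUnion_list hg)).biUnion fun x _ => hf x

lemma exists_of_closedUnder_transferOp (hH : ∀ l, (H l).Countable) (hg : ∀ y, (g y).Countable)
    {T : Set Y} (hT : T.Countable) (hcl : ClosedUnder (transferOp H f g) T) :
    ∃ S : Set X, S.Countable ∧ ClosedUnder H S ∧ (∀ x ∈ S, f x ⊆ T) ∧ ∀ y ∈ T, g y ⊆ S := by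
  let F : List Y → Set X := fun l => closure H (⋃ y ∈ l, g y)
  have hF : ∀ {l₁ l₂ : List Y}, (∀ y ∈ l₁, y ∈ l₂) → F l₁ ⊆ F l₂ := fun h =>
    closure_mono (Set.biUnion_subset_biUnion_left h)
  refine ⟨⋃₀ (F '' {l | ∀ y ∈ l, y ∈ T}), ?_, ?_, ?_, ?_⟩
  · exact ((countable_setOf_forall_mem_list hT).image F).sUnion <| by
      rintro _ ⟨l, -, rfl⟩
      exact countable_closure hH (countable_biUnion_list hg)
  · refine ClosedUnder.sUnion ⟨_, [], by simp, rfl⟩ ?_ ?_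
    · rw [directedOn_image]
      intro l₁ hl₁ l₂ hl₂
      refine ⟨l₁ ++ l₂, ?_, hF fun y hy => ?_, hF fun y hy => ?_⟩ <;> aesop
    · rintro _ ⟨l, -, rfl⟩
      exact closedUnder_closure _
  · rintro x ⟨_, ⟨l, hl, rfl⟩, hx⟩
    exact (Set.subset_biUnion_of_mem hx).trans (hcl l hl)
  · intro y hy
    refine subset_trans ?_ (Set.subset_sUnion_of_mem ⟨[y], by simpa using hy, rfl⟩)
    exact (Set.subset_biUnion_of_mem (u := g) (List.mem_singleton_self y)).trans (subset_closure _)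

end Transfer

end Club

section BooleanAlgebra

variable {B : Type*} [BooleanAlgebra B] {A S : Set B}

lemma pairwise_inf_eq_bot_insert {x : B} (hS : S.Pairwise fun x y => x ⊓ y = ⊥)
    (hx : ∀ s ∈ S, x ⊓ s = ⊥) : (insert x S).Pairwise fun x y => x ⊓ y = ⊥ :=
  Set.pairwise_insert.2 ⟨hS, fun s hs _ => ⟨hx s hs, by rw [inf_comm]; exact hx s hs⟩⟩

lemma isMaxBAAntichainIn_iff :
    IsMaxBAAntichainIn A S ↔ IsBAAntichainIn A S ∧ ∀ x ∈ A, x ≠ ⊥ → ∃ s ∈ S, x ⊓ s ≠ ⊥ := by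
  refine ⟨fun hS => ⟨hS.1, fun x hxA hx => ?_⟩, fun ⟨hS, hmeet⟩ => ⟨hS, fun T hT hST => ?_⟩⟩
  · by_contra! hdisj
    have hxS : x ∈ S := (hS.2 (insert x S)
      ⟨Set.insert_subset hxA hS.1.1, by simpa [eq_comm] using ⟨hx, hS.1.2.1⟩,
        pairwise_inf_eq_bot_insert hS.1.2.2 hdisj⟩ (Set.subset_insert x S)).symm ▸
      Set.mem_insert x S
    exact hx (by simpa using hdisj x hxS)
  · refine subset_antisymm hST fun t ht => ?_
    obtain ⟨s, hs, hts⟩ := hmeet t (hT.1 ht) fun h => hT.2.1 (h ▸ ht)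
    by_contra htS
    exact hts (hT.2.2 ht (hST hs) fun h => htS (h ▸ hs))

lemma IsRegularSubalgebra.exists_forall_inf_ne_bot (hA : IsRegularSubalgebra A) {b : B}
    (hb : b ≠ ⊥) : ∃ a₁ ∈ A, a₁ ≠ ⊥ ∧ ∀ a₂ ∈ A, a₂ ≠ ⊥ → a₂ ≤ a₁ → a₂ ⊓ b ≠ ⊥ := by
  by_contra! hdense
  let D : Set B := {a | a ∈ A ∧ a ≠ ⊥ ∧ a ⊓ b = ⊥}
  obtain ⟨m, hm⟩ := zorn_subset {S | S ⊆ D ∧ S.Pairwise fun x y => x ⊓ y = ⊥}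
    fun c hc hchain => ⟨⋃₀ c, ⟨Set.sUnion_subset fun S hS => (hc hS).1,
      (Set.pairwise_sUnion hchain.directedOn).2 fun S hS => (hc hS).2⟩,
      fun _ => Set.subset_sUnion_of_mem⟩
  -- A maximal antichain of `A` below `bᶜ` is maximal in `A` by density, but not in `B`.
  have hmax : IsMaxBAAntichainIn A m := by
    refine isMaxBAAntichainIn_iff.2 ⟨⟨fun x hx => (hm.1.1 hx).1, fun h => (hm.1.1 h).2.1 rfl,
      hm.1.2⟩, fun x hxA hx => ?_⟩
    obtain ⟨a, haA, ha, hax, hab⟩ := hdense x hxA hx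
    by_contra! hdisj
    have hsub := hm.2 ⟨Set.insert_subset ⟨haA, ha, hab⟩ hm.1.1, pairwise_inf_eq_bot_insert hm.1.2
      fun s hs => le_bot_iff.1 ((inf_le_inf_right s hax).trans (hdisj s hs).le)⟩
      (Set.subset_insert a m)
    exact ha (by simpa [inf_eq_right.2 hax] using hdisj a (hsub (Set.mem_insert a m)))
  obtain ⟨s, hs, hbs⟩ := (isMaxBAAntichainIn_iff.1 (hA.2 m hmax)).2 b trivial hb
  exact hbs (by rw [inf_comm]; exact (hm.1.1 hs).2.2)

lemma isRegularSubalgebra_of_forall_exists (hA : IsBoolSubalgebra A)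
    (h : ∀ b : B, b ≠ ⊥ → ∃ a₁ ∈ A, a₁ ≠ ⊥ ∧ ∀ a₂ ∈ A, a₂ ≠ ⊥ → a₂ ≤ a₁ → a₂ ⊓ b ≠ ⊥) :
    IsRegularSubalgebra A := by
  refine ⟨hA, fun S hS => isMaxBAAntichainIn_iff.2
    ⟨⟨Set.subset_univ S, hS.1.2.1, hS.1.2.2⟩, fun b _ hb => ?_⟩⟩
  obtain ⟨a₁, ha₁A, ha₁, hproj⟩ := h b hb
  obtain ⟨s, hs, ha₁s⟩ := (isMaxBAAntichainIn_iff.1 hS).2 a₁ ha₁A ha₁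
  refine ⟨s, hs, fun hbs => hproj _ (hA.2.2.2.1 a₁ ha₁A s (hS.1.1 hs)) ha₁s inf_le_left ?_⟩
  rw [inf_assoc, inf_comm s, hbs, inf_bot_eq]

def booleanOp (l : List B) : Set B :=
  insert ⊥ (⋃ x ∈ l, ⋃ y ∈ l, {x ⊔ y, x ⊓ y, xᶜ})

lemma countable_booleanOp (l : List B) : (booleanOp l).Countable :=
  ((l.finite_toSet.biUnion fun _ _ => l.finite_toSet.biUnion fun _ _ => Set.toFinite _).insert
    ⊥).countable

lemma isBoolSubalgebra_of_closedUnder (h : Club.ClosedUnder booleanOp A) : IsBoolSubalgebra A := by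
  have hbot : ⊥ ∈ A := h [] (by simp) (Set.mem_insert _ _)
  have hops : ∀ x ∈ A, ∀ y ∈ A, x ⊔ y ∈ A ∧ x ⊓ y ∈ A ∧ xᶜ ∈ A := fun x hx y hy => by
    have := h.pair_subset hx hy
    simp only [booleanOp, Set.insert_subset_iff, Set.iUnion_subset_iff,
      Set.singleton_subset_iff] at this
    exact this.2 x (by simp) y (by simp)
  exact ⟨hbot, compl_bot (α := B) ▸ (hops ⊥ hbot ⊥ hbot).2.2, fun x hx y hy => (hops x hx y hy).1,
    fun x hx y hy => (hops x hx y hy).2.1, fun x hx => (hops x hx x hx).2.2⟩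

end BooleanAlgebra

section Preorder

variable {P : Type*} [Preorder P]

def meetOp (l : List P) : Set P :=
  ⋃ p ∈ l, ⋃ q ∈ l, Club.choiceSet fun r => r ≤ p ∧ r ≤ q

lemma countable_meetOp (l : List P) : (meetOp l).Countable :=
  l.finite_toSet.countable.biUnion fun _ _ =>
    l.finite_toSet.countable.biUnion fun _ _ => Club.countable_choiceSet _

lemma exists_le_le_of_closedUnder_meetOp {R : Set P} (h : Club.ClosedUnder meetOp R) {p q : P}
    (hp : p ∈ R) (hq : q ∈ R) (hpq : PosetCompat p q) : ∃ r ∈ R, r ≤ p ∧ r ≤ q := by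
  obtain ⟨r, hr⟩ := Club.choiceSet_nonempty hpq
  refine ⟨r, h.pair_subset hp hq ?_, (Club.of_mem_choiceSet hr :)⟩
  simp only [meetOp, Set.mem_iUnion]
  exact ⟨p, by simp, q, by simp, hr⟩

end Preorder

namespace RO

attribute [local instance] conesTopology

open TopologicalSpace

variable {P : Type u} [Preorder P]

lemma isLowerSet_of_isOpen {U : Set P} (hU : IsOpen U) : IsLowerSet U := by
  induction hU with
  | basic s hs => obtain ⟨p, rfl⟩ := hs; exact isLowerSet_Iic p
  | univ => exact isLowerSet_univ
  | inter s t _ _ hs ht => exact hs.inter ht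
  | sUnion S _ hS => exact isLowerSet_sUnion hS

def coneOpen (p : P) : Opens P :=
  ⟨Set.Iic p, TopologicalSpace.GenerateOpen.basic _ ⟨p, rfl⟩⟩

def cone (p : P) : RO P := Heyting.Regular.toRegular (coneOpen p)

lemma val_inf (a b : RO P) :
    (Heyting.Regular.val (a ⊓ b) : Opens P) = a.val ⊓ b.val := rfl

lemma val_bot : (Heyting.Regular.val (⊥ : RO P) : Opens P) = ⊥ := rfl

lemma val_cone (p : P) : (Heyting.Regular.val (cone p) : Opens P) = (coneOpen p)ᶜᶜ := rfl

lemma cone_mono : Monotone (cone (P := P)) := fun _ _ h =>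
  Heyting.Regular.toRegular.monotone (Set.Iic_subset_Iic.2 h)

lemma cone_ne_bot (p : P) : cone p ≠ ⊥ := by
  intro h
  have h' := congrArg Heyting.Regular.val h
  rw [val_cone, val_bot] at h'
  exact (h' ▸ le_compl_compl : coneOpen p ≤ ⊥) (le_refl p)

lemma exists_cone_le {b : RO P} (hb : b ≠ ⊥) : ∃ p, cone p ≤ b := by
  obtain ⟨p, hp⟩ : ((Heyting.Regular.val b : Opens P) : Set P).Nonempty := by
    rw [Set.nonempty_iff_ne_empty, ← Opens.coe_bot, Ne, SetLike.coe_set_eq, ← val_bot]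
    exact fun h => hb (Heyting.Regular.coe_injective h)
  refine ⟨p, Heyting.Regular.gi.gc.l_le (b := b) ?_⟩
  exact fun q hq => isLowerSet_of_isOpen (Heyting.Regular.val b).2 hq hp

lemma posetCompat_of_cone_inf_ne_bot {p q : P} (h : cone p ⊓ cone q ≠ ⊥) : PosetCompat p q := by
  by_contra hpq
  have hdisj : coneOpen p ⊓ coneOpen q = ⊥ := by
    ext r
    exact ⟨fun hr => hpq ⟨r, hr⟩, False.elim⟩
  refine h (Heyting.Regular.coe_injective ?_)
  change Heyting.Regular.val (cone p ⊓ cone q) = Heyting.Regular.val (⊥ : RO P)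
  rw [val_inf, val_cone, val_cone, val_bot, ← compl_compl_inf_distrib, hdisj, compl_bot, compl_top]

lemma posetCompat_of_cone_le {p q : P} (h : cone p ≤ cone q) : PosetCompat p q :=
  posetCompat_of_cone_inf_ne_bot (by rw [inf_eq_left.2 h]; exact cone_ne_bot p)

lemma isRegularSubalgebra_of_matching {A : Set (RO P)} {R : Set P} (hA : IsBoolSubalgebra A)
    (hR : IsRegularSubposet R) (hmeet : ∀ p ∈ R, ∀ q ∈ R, PosetCompat p q → ∃ r ∈ R, r ≤ p ∧ r ≤ q)
    (hRA : ∀ p ∈ R, cone p ∈ A) (hAR : ∀ a ∈ A, a ≠ ⊥ → ∃ p ∈ R, cone p ≤ a) :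
    IsRegularSubalgebra A := by
  refine isRegularSubalgebra_of_forall_exists hA fun b hb => ?_
  obtain ⟨p₀, hp₀⟩ := exists_cone_le hb
  obtain ⟨p₁, hp₁R, hp₁⟩ := hR p₀
  refine ⟨cone p₁, hRA p₁ hp₁R, cone_ne_bot p₁, fun a₂ ha₂A ha₂ ha₂₁ => ?_⟩
  obtain ⟨p₂, hp₂R, hp₂⟩ := hAR a₂ ha₂A ha₂
  obtain ⟨p₃, hp₃R, hp₃₂, hp₃₁⟩ :=
    hmeet p₂ hp₂R p₁ hp₁R (posetCompat_of_cone_le (hp₂.trans ha₂₁))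
  obtain ⟨r, hr₃, hr₀⟩ := hp₁ p₃ hp₃R hp₃₁
  exact ne_bot_of_le_ne_bot (cone_ne_bot r)
    (le_inf ((cone_mono (hr₃.trans hp₃₂)).trans hp₂) ((cone_mono hr₀).trans hp₀))

lemma isRegularSubposet_of_matching {A : Set (RO P)} {R : Set P} (hA : IsRegularSubalgebra A)
    (hRA : ∀ p ∈ R, cone p ∈ A) (hAR : ∀ a ∈ A, a ≠ ⊥ → ∃ p ∈ R, cone p ≤ a) :
    IsRegularSubposet R := by
  intro p₀
  obtain ⟨a₁, ha₁A, ha₁, hproj⟩ := hA.exists_forall_inf_ne_bot (cone_ne_bot p₀)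
  obtain ⟨p₁, hp₁R, hp₁⟩ := hAR a₁ ha₁A ha₁
  exact ⟨p₁, hp₁R, fun p₂ hp₂R hp₂₁ => posetCompat_of_cone_inf_ne_bot
    (hproj _ (hRA p₂ hp₂R) (cone_ne_bot p₂) ((cone_mono hp₂₁).trans hp₁))⟩

def densePoints (a : RO P) : Set P :=
  Club.choiceSet fun p => cone p ≤ a

lemma exists_mem_cone_le_of_densePoints_subset {a : RO P} {R : Set P} (h : densePoints a ⊆ R)
    (ha : a ≠ ⊥) : ∃ p ∈ R, cone p ≤ a :=
  let ⟨p, hp⟩ := Club.choiceSet_nonempty (exists_cone_le ha)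
  ⟨p, h hp, (Club.of_mem_choiceSet hp :)⟩

open Club

theorem semiCohenBA_of_semiCohenPoset (h : SemiCohenPoset P) : SemiCohenBA (RO P) := by
  obtain ⟨C, hC, hCreg⟩ := h
  let H : List P → Set P := (fun l => clubChain hC l) ⊔ meetOp
  have hH : ∀ l, (H l).Countable := fun l => (hC.1 _ (clubChain hC l).2).union (countable_meetOp l)
  have hdense : ∀ a : RO P, (densePoints a).Countable := fun _ => countable_choiceSet _
  refine ⟨_, isClubIn_closedUnder (H := booleanOp ⊔ transferOp H (fun p => {cone p}) densePoints)
    fun l => (countable_booleanOp l).union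
      (countable_transferOp hH (fun _ => Set.countable_singleton _) hdense l), ?_⟩
  rintro A ⟨hAc, hAcl⟩
  obtain ⟨R, hRc, hRcl, hRA, hAR⟩ := exists_of_closedUnder_transferOp hH hdense hAc hAcl.right
  exact isRegularSubalgebra_of_matching (isBoolSubalgebra_of_closedUnder hAcl.left)
    (hCreg R (mem_of_closedUnder_clubChain hC hRc hRcl.left))
    (fun p hp q hq => exists_le_le_of_closedUnder_meetOp hRcl.right hp hq)
    (fun p hp => hRA p hp rfl) (fun a ha => exists_mem_cone_le_of_densePoints_subset (hAR a ha))

theorem semiCohenPoset_of_semiCohenBA (h : SemiCohenBA (RO P)) : SemiCohenPoset P := by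
  obtain ⟨C, hC, hCreg⟩ := h
  have hK : ∀ l, (clubChain hC l : Set (RO P)).Countable := fun l => hC.1 _ (clubChain hC l).2
  have hsingle : ∀ p : P, ({cone p} : Set (RO P)).Countable := fun _ => Set.countable_singleton _
  refine ⟨_, isClubIn_closedUnder (H := transferOp (fun l => clubChain hC l) densePoints
    fun p => {cone p}) (countable_transferOp hK (fun _ => countable_choiceSet _) hsingle), ?_⟩
  rintro R ⟨hRc, hRcl⟩
  obtain ⟨A, hAc, hAcl, hAR, hRA⟩ := exists_of_closedUnder_transferOp hK hsingle hRc hRcl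
  exact isRegularSubposet_of_matching (hCreg A (mem_of_closedUnder_clubChain hC hAc hAcl))
    (fun p hp => hRA p hp rfl) (fun a ha => exists_mem_cone_le_of_densePoints_subset (hAR a ha))

end RO

theorem stmt2 (P : Type u) [PartialOrder P] :
    SemiCohenPoset P ↔ SemiCohenBA (RO P) :=
  ⟨RO.semiCohenBA_of_semiCohenPoset, RO.semiCohenPoset_of_semiCohenBA⟩
end

section
/- Let I be a linearly ordered set and J ⊆ I. Then P(J), identified with {p ∈ P(I) : dom(p) ⊆ J}, is a regular subposet of the scale poset P(I). -/
universe u v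

/-- A condition in the scale poset over a linear order `I`: a finite partial function `p` on `I`
together with `n_p ∈ ℕ` such that `p α ∈ ℕ^{n_p}` for `α ∈ dom p`; junk value `0` elsewhere. -/
@[ext] structure ScaleCond (I : Type u) : Type u where
  len : ℕ
  dom : Finset I
  f : I → ℕ → ℕ
  junk : ∀ α i, α ∉ dom ∨ len ≤ i → f α i = 0

/-- The order of the scale poset. -/
instance ScaleCond.instPartialOrder (I : Type u) [LinearOrder I] :
    PartialOrder (ScaleCond I) where
  le p q := q.dom ⊆ p.dom ∧ q.len ≤ p.len ∧
    (∀ α ∈ q.dom, ∀ i < q.len, p.f α i = q.f α i) ∧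
    (∀ i, q.len ≤ i → i < p.len → ∀ β ∈ q.dom, ∀ α ∈ q.dom, β < α → p.f β i ≤ p.f α i)
  le_refl p := ⟨Finset.Subset.refl _, le_refl _, fun _ _ _ _ => rfl,
    fun i hi hi' => absurd hi' (by omega)⟩
  le_trans p q r hpq hqr := by
    obtain ⟨hd1, hn1, hv1, hg1⟩ := hpq
    obtain ⟨hd2, hn2, hv2, hg2⟩ := hqr
    refine ⟨hd2.trans hd1, hn2.trans hn1, ?_, ?_⟩
    · intro α hα i hi
      rw [hv1 α (hd2 hα) i (lt_of_lt_of_le hi hn2), hv2 α hα i hi]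
    · intro i hi hi' β hβ α hα hβα
      by_cases hq : i < q.len
      · rw [hv1 β (hd2 hβ) i hq, hv1 α (hd2 hα) i hq]
        exact hg2 i hi hq β hβ α hα hβα
      · exact hg1 i (by omega) hi' β (hd2 hβ) α (hd2 hα) hβα
  le_antisymm p q hpq hqp := by
    obtain ⟨hd1, hn1, hv1, -⟩ := hpq
    obtain ⟨hd2, hn2, hv2, -⟩ := hqp
    have hdom : p.dom = q.dom := Finset.Subset.antisymm hd2 hd1
    have hlen : p.len = q.len := le_antisymm hn2 hn1
    have hf : p.f = q.f := by
      funext α i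
      by_cases hα : α ∈ q.dom
      · by_cases hi : i < q.len
        · exact hv1 α hα i hi
        · rw [p.junk α i (Or.inr (by omega)), q.junk α i (Or.inr (by omega))]
      · rw [p.junk α i (Or.inl (hdom ▸ hα)), q.junk α i (Or.inl hα)]
    exact ScaleCond.ext hlen hdom hf

/-!
Given `p₀`, take `p₁` to be its restriction to `J`. An extension `p₂` of `p₁` with domain in `J`
meets `dom p₀` only inside `dom p₁`, so there it agrees with `p₀` below `n_{p₀}` and is increasing
at all higher levels. Then `p₂` and `p₀` have a common extension of length `n_{p₂}`: keep `p₂`,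
and give each remaining `α ∈ dom p₀` at level `i ≥ n_{p₀}` the maximum of `p₂(γ)(i)` over the
common points `γ ≤ α`. This is increasing in `α` and, by monotonicity, equals `p₂(α)(i)` at the
common points, so the result extends `p₀` as well.
-/

namespace Finset

variable {ι β : Type*} [Preorder ι] [DecidableLE ι] [SemilatticeSup β] [OrderBot β]

/-- The least monotone majorant of `h` on `s`, read off at `a`. -/
def supBelow (s : Finset ι) (h : ι → β) (a : ι) : β :=
  (s.filter (· ≤ a)).sup h

theorem monotone_supBelow (s : Finset ι) (h : ι → β) : Monotone (s.supBelow h) :=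
  fun _ _ hab => sup_mono fun _ hc => by
    rw [mem_filter] at hc ⊢
    exact ⟨hc.1, hc.2.trans hab⟩

theorem supBelow_eq_of_mem {s : Finset ι} {h : ι → β} (hmono : MonotoneOn h s) {a : ι}
    (ha : a ∈ s) : s.supBelow h a = h a :=
  le_antisymm
    (Finset.sup_le fun _ hc => by
      rw [mem_filter] at hc
      exact hmono hc.1 ha hc.2)
    (le_sup (mem_filter.mpr ⟨ha, le_rfl⟩))

end Finset

namespace ScaleCond

section Restrict

variable {I : Type u}

def restrict (p : ScaleCond I) (J : Set I) [DecidablePred (· ∈ J)] : ScaleCond I where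
  len := p.len
  dom := p.dom.filter (· ∈ J)
  f α i := if α ∈ J then p.f α i else 0
  junk α i h := by
    split_ifs with hJ
    · refine p.junk α i (h.imp_left fun hα hp => hα ?_)
      exact Finset.mem_filter.mpr ⟨hp, hJ⟩
    · rfl

theorem restrict_dom_subset (p : ScaleCond I) (J : Set I) [DecidablePred (· ∈ J)] :
    ↑(p.restrict J).dom ⊆ J :=
  fun _ hα => (Finset.mem_filter.mp hα).2

end Restrict

variable {I : Type u} [LinearOrder I]

def amalgam (q p : ScaleCond I) : ScaleCond I where
  len := q.len
  dom := q.dom ∪ p.dom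
  f α i :=
    if q.len ≤ i then 0
    else if α ∈ q.dom then q.f α i
    else if α ∈ p.dom ∧ p.len ≤ i then (p.dom ∩ q.dom).supBelow (q.f · i) α
    else p.f α i
  junk α i h := by
    rcases h with hα | hi
    · rw [Finset.mem_union, not_or] at hα
      simp only [hα.1, hα.2, false_and, if_false, p.junk α i (Or.inl hα.2), ite_self]
    · rw [if_pos hi]

theorem amalgam_le_left (q p : ScaleCond I) : amalgam q p ≤ q :=
  ⟨Finset.subset_union_left, le_rfl,
    fun α hα i hi => by simp only [amalgam, if_neg (not_le.mpr hi), if_pos hα],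
    fun _ hi hi' => absurd hi (not_le.mpr hi')⟩

theorem amalgam_f_eq_supBelow {q p : ScaleCond I} {α : I} {i : ℕ} (hα : α ∈ p.dom)
    (hi : p.len ≤ i) (hi' : i < q.len) (hmono : MonotoneOn (q.f · i) ↑(p.dom ∩ q.dom)) :
    (amalgam q p).f α i = (p.dom ∩ q.dom).supBelow (q.f · i) α := by
  simp only [amalgam, if_neg (not_le.mpr hi')]
  split_ifs with hq hp
  · exact (Finset.supBelow_eq_of_mem hmono (Finset.mem_inter.mpr ⟨hα, hq⟩)).symm
  · rfl
  · exact absurd ⟨hα, hi⟩ hp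

theorem amalgam_le_right {q p : ScaleCond I} (hlen : p.len ≤ q.len)
    (hagree : ∀ α ∈ p.dom ∩ q.dom, ∀ i < p.len, q.f α i = p.f α i)
    (hmono : ∀ i, p.len ≤ i → i < q.len → MonotoneOn (q.f · i) ↑(p.dom ∩ q.dom)) :
    amalgam q p ≤ p := by
  refine ⟨Finset.subset_union_right, hlen, fun α hα i hi => ?_, fun i hi hi' β hβ α hα hβα => ?_⟩
  · have hi' : ¬ q.len ≤ i := not_le.mpr (hi.trans_le hlen)
    simp only [amalgam, if_neg hi', not_le.mpr hi, and_false, if_false]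
    split_ifs with hq
    · exact hagree α (Finset.mem_inter.mpr ⟨hα, hq⟩) i hi
    · rfl
  · rw [amalgam_f_eq_supBelow (q := q) hβ hi hi' (hmono i hi hi'),
      amalgam_f_eq_supBelow (q := q) hα hi hi' (hmono i hi hi')]
    exact Finset.monotone_supBelow _ _ hβα.le

theorem amalgam_le_of_le_restrict {J : Set I} [DecidablePred (· ∈ J)] {q p : ScaleCond I}
    (hq : q ≤ p.restrict J) (hqJ : ↑q.dom ⊆ J) : amalgam q p ≤ p := by
  obtain ⟨-, hlen, hagree, hmono⟩ := hq
  have hmem : ∀ α ∈ p.dom ∩ q.dom, α ∈ (p.restrict J).dom ∧ α ∈ J := fun α hα => by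
    rw [Finset.mem_inter] at hα
    exact ⟨Finset.mem_filter.mpr ⟨hα.1, hqJ hα.2⟩, hqJ hα.2⟩
  refine amalgam_le_right hlen (fun α hα i hi => ?_) fun i hi hi' => ?_
  · rw [hagree α (hmem α hα).1 i hi]
    exact if_pos (hmem α hα).2
  · exact monotoneOn_iff_forall_lt.mpr fun β hβ α hα hβα =>
      hmono i hi hi' β (hmem β hβ).1 α (hmem α hα).1 hβα

end ScaleCond

theorem stmt3 {I : Type u} [LinearOrder I] (J : Set I) :
    IsRegularSubposet {p : ScaleCond I | ↑p.dom ⊆ J} := by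
  classical
  intro p₀
  refine ⟨p₀.restrict J, p₀.restrict_dom_subset J, fun p₂ hp₂J hp₂ => ?_⟩
  exact ⟨ScaleCond.amalgam p₂ p₀, ScaleCond.amalgam_le_left p₂ p₀,
    ScaleCond.amalgam_le_of_le_restrict hp₂ hp₂J⟩
end

section
/- For every nonempty linearly ordered set I, the scale poset P(I) has uniform density |I| + ℵ₀. -/
universe u v

/-- `D` is dense below `p` in a poset. -/
def DenseBelowInPoset {P : Type u} [Preorder P] (D : Set P) (p : P) : Prop :=
  ∀ q : P, q ≤ p → ∃ d ∈ D, d ≤ q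

/-- A poset has uniform density `κ` if for every `p` the least cardinality of a set dense
below `p` equals `κ`. -/
def PosetUniformDensity (P : Type u) [Preorder P] (κ : Cardinal.{u}) : Prop :=
  ∀ p : P, sInf {c : Cardinal.{u} | ∃ D : Set P, DenseBelowInPoset D p ∧ Cardinal.mk D = c} = κ

/-!
A condition is coded by its length together with the finite set of pairs `(α, p α)`, so there
are at most `|I| + ℵ₀` conditions. Conversely, below any `p` one can lengthen the condition
arbitrarily and add any `α ∈ I` to its domain, so a set dense below `p` is infinite and the
finite domains of its members cover `I`; hence it has at least `|I| + ℵ₀` elements.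
-/

open Cardinal

section DenseBelow

variable {P : Type u} [Preorder P]

lemma DenseBelowInPoset.univ (p : P) : DenseBelowInPoset Set.univ p :=
  fun q _ => ⟨q, trivial, le_rfl⟩

lemma sInf_mk_denseBelow_eq {p : P} {κ : Cardinal.{u}} (hP : #P ≤ κ)
    (hD : ∀ D : Set P, DenseBelowInPoset D p → κ ≤ #D) :
    sInf {c : Cardinal.{u} | ∃ D : Set P, DenseBelowInPoset D p ∧ #D = c} = κ := by
  have huniv : #P ∈ {c : Cardinal.{u} | ∃ D : Set P, DenseBelowInPoset D p ∧ #D = c} :=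
    ⟨Set.univ, DenseBelowInPoset.univ p, mk_univ⟩
  refine le_antisymm ((csInf_le' huniv).trans hP) (le_csInf ⟨_, huniv⟩ ?_)
  rintro _ ⟨D, hDp, rfl⟩
  exact hD D hDp

end DenseBelow

namespace ScaleCond

section Cardinality

variable {I : Type u}

lemma f_eq_of_eqOn {p q : ScaleCond I} (hlen : p.len = q.len) (hdom : p.dom = q.dom)
    (h : ∀ α ∈ p.dom, ∀ i < p.len, p.f α i = q.f α i) : p.f = q.f := by
  funext α i
  by_cases hα : α ∈ p.dom
  · by_cases hi : i < p.len
    · exact h α hα i hi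
    · rw [p.junk α i (.inr (by omega)), q.junk α i (.inr (by omega))]
  · rw [p.junk α i (.inl hα), q.junk α i (.inl (hdom ▸ hα))]

def graph (p : ScaleCond I) : Finset (I × List ℕ) :=
  p.dom.map ⟨fun α => (α, (List.range p.len).map (p.f α)), fun _ _ h => congrArg Prod.fst h⟩

lemma mem_graph {p : ScaleCond I} {α : I} {l : List ℕ} :
    (α, l) ∈ p.graph ↔ α ∈ p.dom ∧ (List.range p.len).map (p.f α) = l := by
  rw [graph, Finset.mem_map]
  constructor
  · rintro ⟨β, hβ, h⟩
    obtain ⟨rfl, rfl⟩ := Prod.mk.inj h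
    exact ⟨hβ, rfl⟩
  · rintro ⟨hα, rfl⟩
    exact ⟨α, hα, rfl⟩

lemma mem_dom_iff_exists_mem_graph {p : ScaleCond I} {α : I} :
    α ∈ p.dom ↔ ∃ l, (α, l) ∈ p.graph := by
  simp [mem_graph]

lemma injective_len_graph : Function.Injective fun p : ScaleCond I => (p.len, p.graph) := by
  intro p q h
  obtain ⟨hlen, hgraph⟩ := Prod.mk.inj h
  have hdom : p.dom = q.dom := by
    ext α
    simp only [mem_dom_iff_exists_mem_graph, hgraph]
  refine ScaleCond.ext hlen hdom (f_eq_of_eqOn hlen hdom fun α hα i hi => ?_)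
  have hq := (mem_graph.1 (hgraph ▸ mem_graph.2 ⟨hα, rfl⟩)).2
  rw [← hlen] at hq
  exact (List.map_inj_left.1 hq i (List.mem_range.2 hi)).symm

lemma mk_le : #(ScaleCond I) ≤ #I + ℵ₀ := by
  classical
  set κ := #I + ℵ₀
  have hκ : ℵ₀ ≤ κ := le_add_self
  have hmul : κ * κ = κ := mul_eq_self hκ
  have hpair : #(I × List ℕ) ≤ κ := by
    rw [mk_prod, lift_uzero, mk_list_eq_aleph0, lift_aleph0, ← hmul]
    exact mul_le_mul' le_self_add hκ
  calc #(ScaleCond I) ≤ #(ℕ × Finset (I × List ℕ)) := mk_le_of_injective injective_len_graph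
    _ = ℵ₀ * #(Finset (I × List ℕ)) := by simp [mk_prod]
    _ ≤ κ * #(List (I × List ℕ)) :=
      mul_le_mul' hκ (mk_le_of_surjective List.toFinset_surjective)
    _ ≤ κ * κ := mul_le_mul_right (mk_list_le_max _ |>.trans (max_le hκ hpair)) _
    _ = κ := hmul

end Cardinality

section Extensions

variable {I : Type u} [LinearOrder I]

lemma exists_le_le_len (p : ScaleCond I) (n : ℕ) : ∃ q ≤ p, n ≤ q.len := by
  refine ⟨⟨p.len + n, p.dom, p.f, fun α i h => p.junk α i (h.imp id fun _ => by omega)⟩,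
    ⟨subset_rfl, by simp, fun _ _ _ _ => rfl, fun i hi _ β _ α _ _ => ?_⟩, by simp⟩
  simp [p.junk β i (.inr hi), p.junk α i (.inr hi)]

lemma exists_le_mem_dom (p : ScaleCond I) (α : I) : ∃ q ≤ p, α ∈ q.dom := by
  refine ⟨⟨p.len, insert α p.dom, p.f, fun β i h =>
      p.junk β i (h.imp (fun hβ hβ' => hβ (Finset.mem_insert_of_mem hβ')) id)⟩,
    ⟨Finset.subset_insert _ _, le_rfl, fun _ _ _ _ => rfl,
      fun _ hi hi' => absurd hi (not_le.2 hi')⟩,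
    Finset.mem_insert_self _ _⟩

variable {D : Set (ScaleCond I)} {p : ScaleCond I}

lemma aleph0_le_mk_of_denseBelow (hD : DenseBelowInPoset D p) : ℵ₀ ≤ #D := by
  rw [aleph0_le_mk_iff, Set.infinite_coe_iff]
  refine Set.Infinite.of_image ScaleCond.len (Set.infinite_of_forall_exists_gt fun n => ?_)
  obtain ⟨q, hqp, hq⟩ := exists_le_le_len p (n + 1)
  obtain ⟨d, hd, hdq⟩ := hD q hqp
  exact ⟨d.len, Set.mem_image_of_mem _ hd, by have := hdq.2.1; omega⟩

lemma mk_le_of_denseBelow (hD : DenseBelowInPoset D p) : #I ≤ #D := by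
  have hcover : (Set.univ : Set I) ⊆ ⋃ d : D, (d.1.dom : Set I) := by
    intro α _
    obtain ⟨q, hqp, hαq⟩ := exists_le_mem_dom p α
    obtain ⟨d, hd, hdq⟩ := hD q hqp
    exact Set.mem_iUnion.2 ⟨⟨d, hd⟩, hdq.1 hαq⟩
  calc #I = #(Set.univ : Set I) := mk_univ.symm
    _ ≤ #(⋃ d : D, (d.1.dom : Set I)) := mk_le_mk_of_subset hcover
    _ ≤ #D * ⨆ d : D, #(d.1.dom : Set I) := mk_iUnion_le _
    _ ≤ #D * ℵ₀ := mul_le_mul_right (ciSup_le' fun d => (Finset.finite_toSet _).lt_aleph0.le) _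
    _ = #D := mul_aleph0_eq (aleph0_le_mk_of_denseBelow hD)

end Extensions

end ScaleCond

theorem stmt5_general (I : Type u) [LinearOrder I] :
    PosetUniformDensity (ScaleCond I) (Cardinal.mk I + Cardinal.aleph0) := fun _ =>
  sInf_mk_denseBelow_eq ScaleCond.mk_le fun _ hD =>
    have hinf := ScaleCond.aleph0_le_mk_of_denseBelow hD
    add_le_of_le hinf (ScaleCond.mk_le_of_denseBelow hD) hinf

theorem stmt5 (I : Type u) [LinearOrder I] [Nonempty I] :
    PosetUniformDensity (ScaleCond I) (Cardinal.mk I + Cardinal.aleph0) :=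
  stmt5_general I
end

section
/- Let I be a linearly ordered set and let F be a filter on the scale poset P(I) such that F meets D_{a,n} = {p : a ⊆ dom(p), n_p ≥ n} for every finite a ⊆ I and n ∈ ℕ, and F meets E_{α,β,n} = {p : α, β ∈ dom(p), n ≤ n_p, and ∃i with n ≤ i < n_p and p(α)(i) < p(β)(i)} for all α < β in I and n ∈ ℕ. Then for each α ∈ I the union f_α = ⋃{p(α) : p ∈ F, α ∈ dom(p)} is a well-defined total function from ℕ to ℕ, and for all α < β in I one has f_α ≪ f_β. -/
universe u v

/-- A filter on a poset: upward closed and downward directed. -/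
def IsPosetFilter {P : Type u} [Preorder P] (F : Set P) : Prop :=
  (∀ p ∈ F, ∀ q, p ≤ q → q ∈ F) ∧ ∀ p ∈ F, ∀ q ∈ F, ∃ r ∈ F, r ≤ p ∧ r ≤ q

/-- `f ≪ g` : `f i ≤ g i` for all but finitely many `i`, and `f i < g i` for infinitely
many `i`. -/
def ScaleLL (f g : ℕ → ℕ) : Prop :=
  (∃ N, ∀ i, N ≤ i → f i ≤ g i) ∧ ∀ N, ∃ i, N ≤ i ∧ f i < g i

/-!
Any two conditions of a filter have a common extension, so they agree wherever both define a
value; hence the values `p α i` for `p ∈ F` glue to one function `f_α`, total because `F` meets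
the sets `D_{a,n}`. Beyond `n_p` for a single `p ∈ F` with `α, β ∈ dom p`, every extension of `p`
keeps `p(α)` below `p(β)` coordinatewise, giving `f_α ≤ f_β` eventually, and meeting the sets
`E_{α,β,n}` gives strict inequality at arbitrarily large coordinates.
-/

namespace ScaleCond

variable {I : Type u} [LinearOrder I] {p q : ScaleCond I} {α β : I} {i : ℕ}

theorem dom_subset_of_le (h : q ≤ p) : p.dom ⊆ q.dom := h.1

theorem len_le_of_le (h : q ≤ p) : p.len ≤ q.len := h.2.1

theorem f_eq_of_le (h : q ≤ p) (hα : α ∈ p.dom) (hi : i < p.len) : q.f α i = p.f α i :=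
  h.2.2.1 α hα i hi

theorem f_le_f_of_le (h : q ≤ p) (hα : α ∈ p.dom) (hβ : β ∈ p.dom) (hαβ : α < β)
    (hpi : p.len ≤ i) (hqi : i < q.len) : q.f α i ≤ q.f β i :=
  h.2.2.2 i hpi hqi α hα β hβ hαβ

end ScaleCond

theorem exists_mem_dom_lt_len {I : Type u} {F : Set (ScaleCond I)}
    (hD : ∀ (a : Finset I) (n : ℕ), ∃ p ∈ F, a ⊆ p.dom ∧ n ≤ p.len)
    (α : I) (i : ℕ) : ∃ p ∈ F, α ∈ p.dom ∧ i < p.len := by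
  obtain ⟨p, hp, hα, hi⟩ := hD {α} (i + 1)
  exact ⟨p, hp, hα (Finset.mem_singleton_self α), hi⟩

section GenericFun

open ScaleCond

variable {I : Type u} [LinearOrder I] {F : Set (ScaleCond I)} {p q : ScaleCond I} {α β : I}
  {i : ℕ}

theorem IsPosetFilter.f_eq_f (hF : IsPosetFilter F) (hp : p ∈ F) (hq : q ∈ F)
    (hαp : α ∈ p.dom) (hαq : α ∈ q.dom) (hip : i < p.len) (hiq : i < q.len) :
    p.f α i = q.f α i := by
  obtain ⟨r, -, hrp, hrq⟩ := hF.2 p hp q hq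
  rw [← f_eq_of_le hrp hαp hip, ← f_eq_of_le hrq hαq hiq]

/-- The union of the `p α` over `p ∈ F`, with junk value `0` where no condition of `F` is
defined at `(α, i)`. -/
noncomputable def genericFun (F : Set (ScaleCond I)) (α : I) (i : ℕ) : ℕ :=
  open Classical in
  if h : ∃ p ∈ F, α ∈ p.dom ∧ i < p.len then h.choose.f α i else 0

theorem genericFun_eq (hF : IsPosetFilter F) (hp : p ∈ F) (hα : α ∈ p.dom) (hi : i < p.len) :
    genericFun F α i = p.f α i := by
  have h : ∃ p ∈ F, α ∈ p.dom ∧ i < p.len := ⟨p, hp, hα, hi⟩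
  obtain ⟨hqF, hαq, hiq⟩ := h.choose_spec
  rw [genericFun, dif_pos h]
  exact hF.f_eq_f hqF hp hαq hα hiq hi

theorem eventually_genericFun_le (hF : IsPosetFilter F)
    (hD : ∀ (a : Finset I) (n : ℕ), ∃ p ∈ F, a ⊆ p.dom ∧ n ≤ p.len) (hαβ : α < β) :
    ∃ N, ∀ i, N ≤ i → genericFun F α i ≤ genericFun F β i := by
  obtain ⟨p, hp, hαβp, -⟩ := hD {α, β} 0
  have hα : α ∈ p.dom := hαβp (by simp)
  have hβ : β ∈ p.dom := hαβp (by simp)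
  refine ⟨p.len, fun i hpi => ?_⟩
  obtain ⟨q, hq, -, hiq⟩ := hD ∅ (i + 1)
  obtain ⟨r, hr, hrp, hrq⟩ := hF.2 p hp q hq
  have hir : i < r.len := (Nat.lt_of_succ_le hiq).trans_le (len_le_of_le hrq)
  rw [genericFun_eq hF hr (dom_subset_of_le hrp hα) hir,
    genericFun_eq hF hr (dom_subset_of_le hrp hβ) hir]
  exact f_le_f_of_le hrp hα hβ hαβ hpi hir

theorem scaleLL_genericFun (hF : IsPosetFilter F)
    (hD : ∀ (a : Finset I) (n : ℕ), ∃ p ∈ F, a ⊆ p.dom ∧ n ≤ p.len) (hαβ : α < β)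
    (hE : ∀ N, ∃ p ∈ F, α ∈ p.dom ∧ β ∈ p.dom ∧ ∃ i, N ≤ i ∧ i < p.len ∧ p.f α i < p.f β i) :
    ScaleLL (genericFun F α) (genericFun F β) := by
  refine ⟨eventually_genericFun_le hF hD hαβ, fun N => ?_⟩
  obtain ⟨p, hp, hα, hβ, i, hNi, hip, hlt⟩ := hE N
  refine ⟨i, hNi, ?_⟩
  rwa [genericFun_eq hF hp hα hip, genericFun_eq hF hp hβ hip]

end GenericFun

theorem stmt7 {I : Type u} [LinearOrder I] (F : Set (ScaleCond I))
    (hF : IsPosetFilter F)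
    (hD : ∀ (a : Finset I) (n : ℕ), ∃ p ∈ F, a ⊆ p.dom ∧ n ≤ p.len)
    (hE : ∀ α β : I, α < β → ∀ n : ℕ, ∃ p ∈ F, α ∈ p.dom ∧ β ∈ p.dom ∧ n ≤ p.len ∧
      ∃ i, n ≤ i ∧ i < p.len ∧ p.f α i < p.f β i) :
    ∃ f : I → ℕ → ℕ,
      (∀ p ∈ F, ∀ α ∈ p.dom, ∀ i < p.len, f α i = p.f α i) ∧
      (∀ α : I, ∀ i : ℕ, ∃ p ∈ F, α ∈ p.dom ∧ i < p.len) ∧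
      ∀ α β : I, α < β → ScaleLL (f α) (f β) := by
  refine ⟨genericFun F, fun p hp α hα i hi => genericFun_eq hF hp hα hi,
    exists_mem_dom_lt_len hD, fun α β hαβ => scaleLL_genericFun hF hD hαβ fun N => ?_⟩
  obtain ⟨p, hp, hα, hβ, -, hi⟩ := hE α β hαβ N
  exact ⟨p, hp, hα, hβ, hi⟩
end

section
/- Let I be a set and J ⊆ I. Then P_ed(J), identified with {p ∈ P_ed(I) : dom(p) ⊆ J}, is a regular subposet of the eventually-different poset P_ed(I). -/
universe u v

/-- A condition in the eventually-different poset over `I`. -/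
@[ext] structure EDCond (I : Type u) : Type u where
  len : ℕ
  dom : Finset I
  f : I → ℕ → ℕ
  junk : ∀ α i, α ∉ dom ∨ len ≤ i → f α i = 0

/-- The order of the eventually-different poset. -/
instance EDCond.instPartialOrder (I : Type u) : PartialOrder (EDCond I) where
  le p q := q.dom ⊆ p.dom ∧ q.len ≤ p.len ∧
    (∀ α ∈ q.dom, ∀ i < q.len, p.f α i = q.f α i) ∧
    (∀ i, q.len ≤ i → i < p.len → ∀ α ∈ q.dom, ∀ β ∈ q.dom, α ≠ β → p.f α i ≠ p.f β i)
  le_refl p := ⟨Finset.Subset.refl _, le_refl _, fun _ _ _ _ => rfl,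
    fun i hi hi' => absurd hi' (by omega)⟩
  le_trans p q r hpq hqr := by
    obtain ⟨hd1, hn1, hv1, hg1⟩ := hpq
    obtain ⟨hd2, hn2, hv2, hg2⟩ := hqr
    refine ⟨hd2.trans hd1, hn2.trans hn1, ?_, ?_⟩
    · intro α hα i hi
      rw [hv1 α (hd2 hα) i (lt_of_lt_of_le hi hn2), hv2 α hα i hi]
    · intro i hi hi' α hα β hβ hαβ
      by_cases hq : i < q.len
      · rw [hv1 α (hd2 hα) i hq, hv1 β (hd2 hβ) i hq]
        exact hg2 i hi hq α hα β hβ hαβ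
      · exact hg1 i (by omega) hi' α (hd2 hα) β (hd2 hβ) hαβ
  le_antisymm p q hpq hqp := by
    obtain ⟨hd1, hn1, hv1, -⟩ := hpq
    obtain ⟨hd2, hn2, hv2, -⟩ := hqp
    have hdom : p.dom = q.dom := Finset.Subset.antisymm hd2 hd1
    have hlen : p.len = q.len := le_antisymm hn2 hn1
    have hf : p.f = q.f := by
      funext α i
      by_cases hα : α ∈ q.dom
      · by_cases hi : i < q.len
        · exact hv1 α hα i hi
        · rw [p.junk α i (Or.inr (by omega)), q.junk α i (Or.inr (by omega))]
      · rw [p.junk α i (Or.inl (hdom ▸ hα)), q.junk α i (Or.inl hα)]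
    exact EDCond.ext hlen hdom hf

/-!
Restrict `p₀` to `J` to get `p₁`. If `p₂ ≤ p₁` has domain inside `J`, then `p₂` and `p₀` share
exactly the coordinates of `p₁`, on which `p₂` already respects `p₀`. A common extension keeps
`p₂` and adds the remaining coordinates of `p₀`, padded from `p₀.len` up to `p₂.len` by values
that are pairwise distinct and larger than every value of `p₂`.
-/

namespace EDCond

variable {I : Type u}

def restrict (p : EDCond I) (s : Set I) [DecidablePred (· ∈ s)] : EDCond I where
  len := p.len
  dom := p.dom.filter (· ∈ s)
  f α i := if α ∈ s then p.f α i else 0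
  junk α i h := by
    split_ifs with hα
    · refine p.junk α i (h.imp (fun h hp => h ?_) id)
      exact Finset.mem_filter.mpr ⟨hp, hα⟩
    · rfl

theorem coe_restrict_dom_subset (p : EDCond I) (s : Set I) [DecidablePred (· ∈ s)] :
    ↑(p.restrict s).dom ⊆ s :=
  fun _ hα => (Finset.mem_filter.mp hα).2

def valSup (p : EDCond I) : ℕ :=
  p.dom.sup fun β => (Finset.range p.len).sup (p.f β)

theorem f_le_valSup (p : EDCond I) (α : I) (i : ℕ) : p.f α i ≤ p.valSup := by
  by_cases h : α ∈ p.dom ∧ i < p.len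
  · exact le_trans (Finset.le_sup (Finset.mem_range.mpr h.2))
      (Finset.le_sup (f := fun β => (Finset.range p.len).sup (p.f β)) h.1)
  · rw [p.junk α i ((not_and_or.mp h).imp_right Nat.le_of_not_lt)]
    exact Nat.zero_le _

variable [DecidableEq I]

noncomputable def index (p : EDCond I) (α : I) : ℕ :=
  if h : α ∈ p.dom then (p.dom.equivFin ⟨α, h⟩ : ℕ) else 0

theorem index_injOn (p : EDCond I) : Set.InjOn p.index p.dom := by
  intro α hα β hβ h
  simp only [index, dif_pos (Finset.mem_coe.mp hα), dif_pos (Finset.mem_coe.mp hβ)] at h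
  exact congrArg Subtype.val (p.dom.equivFin.injective (Fin.ext h))

noncomputable def amalgam (q p : EDCond I) : EDCond I where
  len := q.len
  dom := q.dom ∪ p.dom
  f α i :=
    if α ∈ q.dom then q.f α i
    else if α ∈ p.dom ∧ i < q.len then
      (if i < p.len then p.f α i else q.valSup + 1 + p.index α)
    else 0
  junk α i h := by
    rcases h with h | h
    · simp only [Finset.mem_union, not_or] at h
      simp [h.1, h.2]
    · split_ifs with hq hp
      · exact q.junk α i (Or.inr h)
      · omega
      · omega
      · rfl

section amalgam

variable {q p : EDCond I} {α : I} {i : ℕ}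

theorem amalgam_f_of_mem (hα : α ∈ q.dom) : (q.amalgam p).f α i = q.f α i :=
  if_pos hα

theorem amalgam_f_of_lt (hαq : α ∉ q.dom) (hαp : α ∈ p.dom) (hiq : i < q.len)
    (hip : i < p.len) : (q.amalgam p).f α i = p.f α i := by
  simp [amalgam, hαq, hαp, hiq, hip]

theorem amalgam_f_of_le (hαq : α ∉ q.dom) (hαp : α ∈ p.dom) (hiq : i < q.len)
    (hip : p.len ≤ i) : (q.amalgam p).f α i = q.valSup + 1 + p.index α := by
  simp [amalgam, hαq, hαp, hiq, Nat.not_lt.mpr hip]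

theorem amalgam_le_left : q.amalgam p ≤ q :=
  ⟨Finset.subset_union_left, le_rfl, fun _ hα _ _ => amalgam_f_of_mem hα,
    fun _ hi hi' => absurd hi' (Nat.not_lt.mpr hi)⟩

theorem amalgam_le_right (hlen : p.len ≤ q.len)
    (hagree : ∀ α ∈ p.dom, α ∈ q.dom → ∀ i < p.len, q.f α i = p.f α i)
    (hdistinct : ∀ i, p.len ≤ i → i < q.len → ∀ α ∈ p.dom, ∀ β ∈ p.dom,
      α ∈ q.dom → β ∈ q.dom → α ≠ β → q.f α i ≠ q.f β i) :
    q.amalgam p ≤ p := by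
  refine ⟨Finset.subset_union_right, hlen, fun α hα i hi => ?_, ?_⟩
  · by_cases hαq : α ∈ q.dom
    · rw [amalgam_f_of_mem hαq, hagree α hα hαq i hi]
    · exact amalgam_f_of_lt hαq hα (by omega) hi
  · intro i hi hi' α hα β hβ hαβ
    change i < q.len at hi'
    by_cases hαq : α ∈ q.dom <;> by_cases hβq : β ∈ q.dom
    · rw [amalgam_f_of_mem hαq, amalgam_f_of_mem hβq]
      exact hdistinct i hi hi' α hα β hβ hαq hβq hαβ
    · rw [amalgam_f_of_mem hαq, amalgam_f_of_le hβq hβ hi' hi]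
      have := q.f_le_valSup α i
      omega
    · rw [amalgam_f_of_le hαq hα hi' hi, amalgam_f_of_mem hβq]
      have := q.f_le_valSup β i
      omega
    · rw [amalgam_f_of_le hαq hα hi' hi, amalgam_f_of_le hβq hβ hi' hi]
      exact fun h => hαβ (p.index_injOn hα hβ (by omega))

end amalgam

theorem posetCompat_of_le_restrict {q p : EDCond I} {s : Set I} [DecidablePred (· ∈ s)]
    (hle : q ≤ p.restrict s) (hs : ↑q.dom ⊆ s) : PosetCompat q p := by
  obtain ⟨-, hlen, hagree, hdistinct⟩ := hle
  have hmem : ∀ α ∈ p.dom, α ∈ q.dom → α ∈ (p.restrict s).dom :=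
    fun α hα hαq => Finset.mem_filter.mpr ⟨hα, hs hαq⟩
  refine ⟨q.amalgam p, amalgam_le_left, amalgam_le_right hlen ?_ ?_⟩
  · intro α hα hαq i hi
    rw [hagree α (hmem α hα hαq) i hi]
    exact if_pos (hs hαq)
  · exact fun i hi hi' α hα β hβ hαq hβq =>
      hdistinct i hi hi' α (hmem α hα hαq) β (hmem β hβ hβq)

end EDCond

theorem stmt8 {I : Type u} (J : Set I) :
    IsRegularSubposet {p : EDCond I | ↑p.dom ⊆ J} := by
  classical
  intro p₀
  exact ⟨p₀.restrict J, p₀.coe_restrict_dom_subset J,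
    fun _ hq hle => EDCond.posetCompat_of_le_restrict hle hq⟩
end

section
/- For every nonempty set I, the eventually-different poset P_ed(I) has uniform density |I| + ℵ₀. -/
universe u v

/-!
A set `D` dense below `p` must contain conditions of arbitrarily large length, so it is
infinite, and every `α ∈ I` must occur in the (finite) domain of some member of `D`, so
`#I ≤ #D * ℵ₀`. Conversely the whole poset is dense and has size at most `#I + ℵ₀`, since a
condition is a finite amount of data: its length, its domain, and finitely many values.
-/

open Cardinal

theorem Cardinal.mk_finset_le_max (α : Type u) : #(Finset α) ≤ max ℵ₀ #α := by
  classical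
  exact (mk_le_of_surjective List.toFinset_surjective).trans (mk_list_le_max α)

namespace EDCond

variable {I : Type u}

theorem dom_subset_of_le {p q : EDCond I} (h : q ≤ p) : p.dom ⊆ q.dom := h.1

theorem len_le_of_le {p q : EDCond I} (h : q ≤ p) : p.len ≤ q.len := h.2.1

open Classical in
noncomputable def lengthen (p : EDCond I) (n : ℕ) : EDCond I where
  len := max p.len n
  dom := p.dom
  f α i :=
    if h : α ∈ p.dom ∧ p.len ≤ i ∧ i < max p.len n then p.dom.equivFin ⟨α, h.1⟩ else p.f α i
  junk α i hα := by
    rw [dif_neg fun h => hα.elim (· h.1) fun hi => h.2.2.not_ge hi]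
    exact p.junk α i (hα.imp_right (le_trans (le_max_left _ _)))

theorem lengthen_le (p : EDCond I) (n : ℕ) : p.lengthen n ≤ p := by
  refine ⟨subset_rfl, le_max_left _ _, fun α _ i hi => dif_neg (by omega), ?_⟩
  intro i hi hi' α hα β hβ hαβ hval
  have hnew : ∀ γ (hγ : γ ∈ p.dom), (p.lengthen n).f γ i = p.dom.equivFin ⟨γ, hγ⟩ :=
    fun γ hγ => dif_pos ⟨hγ, hi, hi'⟩
  rw [hnew α hα, hnew β hβ] at hval
  exact hαβ (congrArg Subtype.val (p.dom.equivFin.injective (Fin.val_injective hval)))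

theorem le_len_lengthen (p : EDCond I) (n : ℕ) : n ≤ (p.lengthen n).len := le_max_right _ _

def insertDom [DecidableEq I] (p : EDCond I) (α : I) : EDCond I where
  len := p.len
  dom := insert α p.dom
  f := p.f
  junk β i hβ := p.junk β i (hβ.imp_left (mt (Finset.mem_insert_of_mem)))

theorem insertDom_le [DecidableEq I] (p : EDCond I) (α : I) : p.insertDom α ≤ p :=
  ⟨Finset.subset_insert _ _, le_rfl, fun _ _ _ _ => rfl, fun _ hi hi' => absurd hi' hi.not_gt⟩

theorem mem_dom_insertDom [DecidableEq I] (p : EDCond I) (α : I) : α ∈ (p.insertDom α).dom :=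
  Finset.mem_insert_self _ _

theorem injective_len_dom_graph [DecidableEq I] :
    Function.Injective fun p : EDCond I =>
      (p.len, p.dom, (p.dom ×ˢ Finset.range p.len).image fun x => (x, p.f x.1 x.2)) := by
  intro p q h
  simp only [Prod.mk.injEq] at h
  obtain ⟨hlen, hdom, hgraph⟩ := h
  refine EDCond.ext hlen hdom (funext fun α => funext fun i => ?_)
  by_cases hα : α ∈ p.dom
  · by_cases hi : i < p.len
    · have hmem : ((α, i), p.f α i) ∈ (q.dom ×ˢ Finset.range q.len).image
          fun x => (x, q.f x.1 x.2) :=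
        hgraph ▸ Finset.mem_image_of_mem _ (by simp [hα, hi])
      obtain ⟨_, -, hx⟩ := Finset.mem_image.mp hmem
      simp only [Prod.mk.injEq] at hx
      obtain ⟨rfl, hval⟩ := hx
      exact hval.symm
    · rw [p.junk α i (Or.inr (by omega)), q.junk α i (Or.inr (by omega))]
  · rw [p.junk α i (Or.inl hα), q.junk α i (Or.inl (hdom ▸ hα))]

theorem mk_le : #(EDCond I) ≤ #I + ℵ₀ := by
  classical
  rw [add_eq_max' le_rfl, max_comm]
  set c := max ℵ₀ #I
  have hc : ℵ₀ ≤ c := le_max_left _ _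
  have hI : #I ≤ c := le_max_right _ _
  have hgraph : #((I × ℕ) × ℕ) ≤ c := by
    simp only [mk_prod, mk_nat, lift_uzero, lift_aleph0]
    exact mul_le_of_le hc (mul_le_of_le hc hI hc) hc
  have hfinset {α : Type u} (hα : #α ≤ c) : #(Finset α) ≤ c :=
    (mk_finset_le_max α).trans (max_le hc hα)
  calc #(EDCond I) ≤ #(ℕ × Finset I × Finset ((I × ℕ) × ℕ)) :=
        mk_le_of_injective injective_len_dom_graph
    _ ≤ c := by
        simp only [mk_prod, mk_nat, lift_id, lift_uzero, lift_aleph0]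
        exact mul_le_of_le hc hc (mul_le_of_le hc (hfinset hI) (hfinset hgraph))

theorem aleph0_le_mk_of_denseBelow {D : Set (EDCond I)} {p : EDCond I}
    (hD : DenseBelowInPoset D p) : ℵ₀ ≤ #D := by
  have hunbounded : ¬BddAbove (len '' D) := by
    rintro ⟨N, hN⟩
    obtain ⟨d, hd, hdle⟩ := hD _ (p.lengthen_le (N + 1))
    have hlong : N + 1 ≤ d.len := (p.le_len_lengthen (N + 1)).trans (len_le_of_le hdle)
    have hshort : d.len ≤ N := hN ⟨d, hd, rfl⟩
    omega
  exact infinite_iff.mp (Set.infinite_of_not_bddAbove hunbounded).of_image.to_subtype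

theorem mk_le_mk_of_denseBelow {D : Set (EDCond I)} {p : EDCond I}
    (hD : DenseBelowInPoset D p) : #I ≤ #D := by
  classical
  have hcover : (Set.univ : Set I) ⊆ ⋃ d ∈ D, (d.dom : Set I) := by
    intro α _
    obtain ⟨d, hd, hdle⟩ := hD _ (p.insertDom_le α)
    exact Set.mem_biUnion hd (dom_subset_of_le hdle (p.mem_dom_insertDom α))
  have hfinite : ⨆ d : D, #((d : EDCond I).dom : Set I) ≤ ℵ₀ :=
    ciSup_le' fun d => (lt_aleph0_of_finite _).le
  calc #I = #(Set.univ : Set I) := mk_univ.symm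
    _ ≤ #(⋃ d ∈ D, (d.dom : Set I)) := mk_le_mk_of_subset hcover
    _ ≤ #D * ⨆ d : D, #((d : EDCond I).dom : Set I) := mk_biUnion_le _ _
    _ ≤ #D * ℵ₀ := by gcongr
    _ = #D := mul_aleph0_eq (aleph0_le_mk_of_denseBelow hD)

end EDCond

theorem stmt10_general (I : Type u) :
    PosetUniformDensity (EDCond I) (Cardinal.mk I + Cardinal.aleph0) := by
  intro p
  have hdense_univ : DenseBelowInPoset (Set.univ : Set (EDCond I)) p :=
    fun q _ => ⟨q, trivial, le_rfl⟩
  apply le_antisymm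
  · refine le_trans (csInf_le' ⟨Set.univ, hdense_univ, rfl⟩) ?_
    exact mk_univ.trans_le EDCond.mk_le
  · refine le_csInf ⟨_, _, hdense_univ, rfl⟩ ?_
    rintro _ ⟨D, hD, rfl⟩
    exact add_le_of_le (EDCond.aleph0_le_mk_of_denseBelow hD)
      (EDCond.mk_le_mk_of_denseBelow hD) (EDCond.aleph0_le_mk_of_denseBelow hD)

theorem stmt10 (I : Type u) [Nonempty I] :
    PosetUniformDensity (EDCond I) (Cardinal.mk I + Cardinal.aleph0) :=
  stmt10_general I
end

section
/- Let Λ be a set and (f_γ)_{γ∈Λ} a family of functions ℕ → ℕ that is pairwise eventually different, i.e., for γ ≠ δ one has f_γ(i) ≠ f_δ(i) for all but finitely many i. Then the poset Q = {(s,a) : s ∈ ℕ^{<ω}, a a finite subset of Λ}, ordered by (s₁,a₁) ≤ (s₀,a₀) iff s₀ is an initial segment of s₁, a₀ ⊆ a₁, and for every i ∈ dom(s₁)∖dom(s₀) and every γ ∈ a₀ one has s₁(i) ≠ f_γ(i), is separative: whenever q₀ ≰ q₁ in Q there exists q₂ ≤ q₀ that is incompatible with q₁. -/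
/-!
If the stem `s₁` of `q₁` is not a prefix of `s₀`, extend `s₀` by one entry that differs from
`s₁` at position `|s₀|` and from every `f γ`, `γ ∈ a₀`: any common extension would then need
`s₀` to be a proper prefix of `s₁`, which that entry forbids. If `s₁ <+: s₀` but some `δ ∈ a₁` is
missing from `a₀`, extend `s₀` up to a position `N` beyond which `f δ` differs from all `f γ`,
`γ ∈ a₀`, and put the value `f δ N` there: this is allowed below `q₀` but forbidden below `q₁`.
Otherwise `q₀` itself already hits some `f γ`, `γ ∈ a₁`, above `|s₁|`, so it is incompatible
with `q₁`.
-/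

universe u v

/-- The order of the poset `Q` built from a family `f` of functions. -/
def QLe {Λ : Type u} (f : Λ → ℕ → ℕ) (q₁ q₀ : List ℕ × Finset Λ) : Prop :=
  q₀.1 <+: q₁.1 ∧ q₀.2 ⊆ q₁.2 ∧
    ∀ i, q₀.1.length ≤ i → i < q₁.1.length → ∀ γ ∈ q₀.2, q₁.1.getD i 0 ≠ f γ i

/-- A pairwise eventually different family of functions. -/
def PairwiseEvDiff {Λ : Type u} (f : Λ → ℕ → ℕ) : Prop :=
  ∀ γ δ : Λ, γ ≠ δ → ∃ N, ∀ i, N ≤ i → f γ i ≠ f δ i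

open Filter

lemma List.getD_eq_of_prefix {α : Type*} {l L : List α} (h : l <+: L) {i : ℕ}
    (hi : i < l.length) (d : α) : L.getD i d = l.getD i d := by
  obtain ⟨t, rfl⟩ := h
  exact List.getD_append _ _ _ _ hi

section Poset

variable {Λ : Type*} (f : Λ → ℕ → ℕ)

def QCompatible (q q' : List ℕ × Finset Λ) : Prop :=
  ∃ r, QLe f r q ∧ QLe f r q'

lemma QLe.refl (q : List ℕ × Finset Λ) : QLe f q q :=
  ⟨List.prefix_refl _, Finset.Subset.refl _, fun _ h₁ h₂ _ _ => absurd h₂ (by omega)⟩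

def freshValue (a : Finset Λ) (c i : ℕ) : ℕ :=
  c + 1 + a.sup (fun γ => f γ i)

lemma freshValue_ne (a : Finset Λ) (c i : ℕ) : freshValue f a c i ≠ c := by
  unfold freshValue; omega

lemma freshValue_ne_apply {a : Finset Λ} (c i : ℕ) {γ : Λ} (hγ : γ ∈ a) :
    freshValue f a c i ≠ f γ i := by
  have := Finset.le_sup (f := fun γ => f γ i) hγ
  unfold freshValue; omega

end Poset

lemma PairwiseEvDiff.eventually_forall_ne {Λ : Type*} {f : Λ → ℕ → ℕ} (hf : PairwiseEvDiff f)
    {a : Finset Λ} {δ : Λ} (hδ : δ ∉ a) : ∀ᶠ i in atTop, ∀ γ ∈ a, f γ i ≠ f δ i :=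
  (eventually_all_finset a).2 fun γ hγ =>
    eventually_atTop.2 (hf γ δ (by rintro rfl; exact hδ hγ))

section Extension

def extendTo (s : List ℕ) (g : ℕ → ℕ) (n : ℕ) : List ℕ :=
  s ++ (List.range' s.length (n - s.length)).map g

variable (s : List ℕ) (g : ℕ → ℕ) (n : ℕ)

lemma prefix_extendTo : s <+: extendTo s g n := List.prefix_append _ _

lemma length_extendTo : (extendTo s g n).length = s.length + (n - s.length) := by
  simp [extendTo]

lemma getD_extendTo {i : ℕ} (h₁ : s.length ≤ i) (h₂ : i < n) :
    (extendTo s g n).getD i 0 = g i := by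
  rw [extendTo, List.getD_append_right _ _ _ _ h₁, List.getD_eq_getElem _ _ (by simp; omega),
    List.getElem_map, List.getElem_range']
  congr 1; omega

lemma qLe_extendTo {Λ : Type*} (f : Λ → ℕ → ℕ) (a : Finset Λ)
    (hg : ∀ i, s.length ≤ i → i < n → ∀ γ ∈ a, g i ≠ f γ i) :
    QLe f (extendTo s g n, a) (s, a) := by
  refine ⟨prefix_extendTo s g n, Finset.Subset.refl _, fun i (h₁ : s.length ≤ i) h₂ γ hγ => ?_⟩
  have h₂ : i < n := by simp only [length_extendTo] at h₂; omega
  rw [getD_extendTo s g n h₁ h₂]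
  exact hg i h₁ h₂ γ hγ

end Extension

section Incompatibility

variable {Λ : Type*} {f : Λ → ℕ → ℕ} {q₁ q₂ : List ℕ × Finset Λ}

lemma not_qCompatible_of_getD_eq {i : ℕ} {γ : Λ} (h₁ : q₁.1.length ≤ i) (h₂ : i < q₂.1.length)
    (hγ : γ ∈ q₁.2) (hi : q₂.1.getD i 0 = f γ i) : ¬ QCompatible f q₂ q₁ := by
  rintro ⟨r, hr₂, hr₁⟩
  refine hr₁.2.2 i h₁ (h₂.trans_le hr₂.1.length_le) γ hγ ?_
  rw [List.getD_eq_of_prefix hr₂.1 h₂ 0, hi]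

lemma not_qCompatible_of_not_prefix {s : List ℕ} (hs : ¬ q₁.1 <+: s) (hs₂ : s <+: q₂.1)
    (hlen : s.length < q₂.1.length) (hne : q₂.1.getD s.length 0 ≠ q₁.1.getD s.length 0) :
    ¬ QCompatible f q₂ q₁ := by
  rintro ⟨r, hr₂, hr₁⟩
  have hsr : s <+: r.1 := hs₂.trans hr₂.1
  have hlen₁ : s.length < q₁.1.length := by
    by_contra! hle
    exact hs (List.prefix_of_prefix_length_le hr₁.1 hsr hle)
  apply hne
  rw [← List.getD_eq_of_prefix hr₂.1 hlen 0, List.getD_eq_of_prefix hr₁.1 hlen₁ 0]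

end Incompatibility

section Separation

variable {Λ : Type*} {f : Λ → ℕ → ℕ} {q₀ q₁ : List ℕ × Finset Λ}

lemma exists_qLe_not_qCompatible_of_not_prefix (hs : ¬ q₁.1 <+: q₀.1) :
    ∃ q₂, QLe f q₂ q₀ ∧ ¬ QCompatible f q₂ q₁ := by
  obtain ⟨s₀, a₀⟩ := q₀
  set g := fun i => freshValue f a₀ (q₁.1.getD i 0) i
  refine ⟨(extendTo s₀ g (s₀.length + 1), a₀),
    qLe_extendTo _ _ _ f _ fun i _ _ γ hγ => freshValue_ne_apply f _ i hγ, ?_⟩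
  refine not_qCompatible_of_not_prefix hs (prefix_extendTo _ _ _)
    (by simp [length_extendTo]) ?_
  rw [getD_extendTo _ _ _ le_rfl (Nat.lt_succ_self _)]
  exact freshValue_ne f _ _ _

lemma exists_qLe_not_qCompatible_of_not_subset (hf : PairwiseEvDiff f) (hs : q₁.1 <+: q₀.1)
    (ha : ¬ q₁.2 ⊆ q₀.2) :
    ∃ q₂, QLe f q₂ q₀ ∧ ¬ QCompatible f q₂ q₁ := by
  obtain ⟨s₀, a₀⟩ := q₀
  obtain ⟨δ, hδ₁, hδ₀⟩ := Finset.not_subset.mp ha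
  obtain ⟨N, hN, hNδ⟩ :=
    ((eventually_ge_atTop s₀.length).and (hf.eventually_forall_ne hδ₀)).exists
  set g := fun i => if i < N then freshValue f a₀ 0 i else f δ i
  have hgN : g N = f δ N := if_neg (lt_irrefl N)
  refine ⟨(extendTo s₀ g (N + 1), a₀), qLe_extendTo _ _ _ f _ fun i _ hi γ hγ => ?_, ?_⟩
  · rcases (Nat.lt_succ_iff.mp hi).lt_or_eq with hi | rfl
    · rw [show g i = freshValue f a₀ 0 i from if_pos hi]
      exact freshValue_ne_apply f 0 i hγ
    · rw [hgN]
      exact (hNδ γ hγ).symm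
  · refine not_qCompatible_of_getD_eq (hs.length_le.trans hN) (by simp [length_extendTo]; omega)
      hδ₁ ?_
    rw [getD_extendTo _ _ _ hN (Nat.lt_succ_self N), hgN]

end Separation

theorem stmt12 {Λ : Type u} (f : Λ → ℕ → ℕ) (hf : PairwiseEvDiff f)
    (q₀ q₁ : List ℕ × Finset Λ) (h : ¬ QLe f q₀ q₁) :
    ∃ q₂, QLe f q₂ q₀ ∧ ¬ ∃ r, QLe f r q₂ ∧ QLe f r q₁ := by
  by_cases hs : q₁.1 <+: q₀.1
  · by_cases ha : q₁.2 ⊆ q₀.2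
    · have hhit : ¬ ∀ i, q₁.1.length ≤ i → i < q₀.1.length → ∀ γ ∈ q₁.2,
          q₀.1.getD i 0 ≠ f γ i := fun h' => h ⟨hs, ha, h'⟩
      push Not at hhit
      obtain ⟨i, h₁, h₂, γ, hγ, hi⟩ := hhit
      exact ⟨q₀, QLe.refl f q₀, not_qCompatible_of_getD_eq h₁ h₂ hγ hi⟩
    · exact exists_qLe_not_qCompatible_of_not_subset hf hs ha
  · exact exists_qLe_not_qCompatible_of_not_prefix hs
end

section
/- Let Λ be an infinite set and (f_γ)_{γ∈Λ} a family of functions ℕ → ℕ that is pairwise eventually different, i.e., for γ ≠ δ one has f_γ(i) ≠ f_δ(i) for all but finitely many i. Then the poset Q = {(s,a) : s ∈ ℕ^{<ω}, a a finite subset of Λ}, ordered by (s₁,a₁) ≤ (s₀,a₀) iff s₀ is an initial segment of s₁, a₀ ⊆ a₁, and for every i ∈ dom(s₁)∖dom(s₀) and every γ ∈ a₀ one has s₁(i) ≠ f_γ(i), has uniform density |Λ|. -/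
universe u v

lemma qle_refl {Λ : Type u} (f : Λ → ℕ → ℕ) (q : List ℕ × Finset Λ) : QLe f q q :=
  ⟨List.prefix_refl _, Finset.Subset.refl _, fun i h1 h2 => absurd h2 (by omega)⟩

lemma dense_lower {Λ : Type u} [Infinite Λ] (f : Λ → ℕ → ℕ)
    (q : List ℕ × Finset Λ) (D : Set (List ℕ × Finset Λ))
    (hD : ∀ q', QLe f q' q → ∃ d ∈ D, QLe f d q') :
    Cardinal.mk Λ ≤ Cardinal.mk D := by
  classical
  have hq : ∀ γ : Λ, QLe f (q.1, insert γ q.2) q := fun γ =>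
    ⟨List.prefix_refl _, Finset.subset_insert _ _, fun i h1 h2 => absurd (h1.trans_lt h2) (lt_irrefl _)⟩
  choose d hdD hdle using fun γ => hD _ (hq γ)
  have hmem : ∀ γ, γ ∈ (d γ).2 := fun γ => (hdle γ).2.1 (Finset.mem_insert_self _ _)
  have hcover : (Set.univ : Set Λ) ⊆ ⋃ p : D, ((p : List ℕ × Finset Λ).2 : Set Λ) := by
    intro γ _
    exact Set.mem_iUnion.mpr ⟨⟨d γ, hdD γ⟩, hmem γ⟩
  have hDinf : D.Infinite := by
    intro hfin
    haveI := hfin.to_subtype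
    have : (Set.univ : Set Λ).Finite :=
      Set.Finite.subset (Set.finite_iUnion (fun p : D => (↑(p : List ℕ × Finset Λ).2 : Set Λ).toFinite)) hcover
    exact Set.infinite_univ this
  haveI := hDinf.to_subtype
  have haleph : (Cardinal.aleph0 : Cardinal.{u}) ≤ Cardinal.mk D := Cardinal.aleph0_le_mk _
  calc Cardinal.mk Λ = Cardinal.mk (Set.univ : Set Λ) := Cardinal.mk_univ.symm
    _ ≤ Cardinal.mk (⋃ p : D, ((p : List ℕ × Finset Λ).2 : Set Λ)) :=
        Cardinal.mk_le_mk_of_subset hcover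
    _ ≤ Cardinal.mk D * ⨆ p : D, Cardinal.mk (((p : List ℕ × Finset Λ).2 : Set Λ)) :=
        Cardinal.mk_iUnion_le _
    _ ≤ Cardinal.mk D * Cardinal.aleph0 := by
        refine mul_le_mul_right (ciSup_le' fun p => ?_) _
        exact le_of_lt (Cardinal.lt_aleph0_of_finite _)
    _ ≤ Cardinal.mk D * Cardinal.mk D := mul_le_mul_right haleph _
    _ = Cardinal.mk D := Cardinal.mul_eq_self haleph

lemma prod_card_le {Λ : Type u} [Infinite Λ] :
    Cardinal.mk (List ℕ × Finset Λ) ≤ Cardinal.mk Λ := by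
  rw [Cardinal.mk_prod, Cardinal.mk_eq_aleph0 (List ℕ), Cardinal.lift_aleph0,
    Cardinal.mk_finset_of_infinite, Cardinal.lift_uzero]
  exact le_of_eq (Cardinal.aleph0_mul_eq (Cardinal.aleph0_le_mk Λ))

theorem stmt13 {Λ : Type u} [Infinite Λ] (f : Λ → ℕ → ℕ) (hf : PairwiseEvDiff f)
    (q : List ℕ × Finset Λ) :
    sInf {c : Cardinal.{u} | ∃ D : Set (List ℕ × Finset Λ),
      (∀ q', QLe f q' q → ∃ d ∈ D, QLe f d q') ∧ Cardinal.mk D = c} = Cardinal.mk Λ := by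
  have hdense : ∀ q', QLe f q' q → ∃ d ∈ {d | QLe f d q}, QLe f d q' :=
    fun q' h => ⟨q', h, qle_refl f q'⟩
  have hcard : Cardinal.mk {d | QLe f d q} = Cardinal.mk Λ :=
    le_antisymm (le_trans (Cardinal.mk_set_le _) prod_card_le) (dense_lower f q _ hdense)
  have hmem : Cardinal.mk Λ ∈ {c : Cardinal.{u} | ∃ D : Set (List ℕ × Finset Λ),
      (∀ q', QLe f q' q → ∃ d ∈ D, QLe f d q') ∧ Cardinal.mk D = c} :=
    ⟨{d | QLe f d q}, hdense, hcard⟩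
  refine le_antisymm (csInf_le' hmem) (le_csInf ⟨_, hmem⟩ ?_)
  rintro c ⟨D, hD, rfl⟩
  exact dense_lower f q D hD
end

section
/- The set D is dense in the poset R: every element of R has an extension belonging to D. -/
universe u v

/-- A condition of the poset `R`. -/
@[ext] structure RCond (ι : Type u) : Type u where
  d0 : Finset ι
  d1 : Finset ι
  v0 : ι → List ℕ
  v1 : ι → ℕ
  hasStar : Bool
  star : Finset (List ℕ × ℕ)
  junk0 : ∀ α ∉ d0, v0 α = []
  junk1 : ∀ α ∉ d1, v1 α = 0
  junkStar : hasStar = false → star = ∅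
  starFun : ∀ σ m m', (σ, m) ∈ star → (σ, m') ∈ star → m = m'
  starInj : ∀ σ τ m, (σ, m) ∈ star → (τ, m) ∈ star → σ.length = τ.length → σ = τ

/-- Conditions in `R` are ordered by coordinatewise extension. -/
instance RCond.instPartialOrder (ι : Type u) : PartialOrder (RCond ι) where
  le r₁ r₀ := r₀.d0 ⊆ r₁.d0 ∧ r₀.d1 ⊆ r₁.d1 ∧ (r₀.hasStar = true → r₁.hasStar = true) ∧
    (∀ α ∈ r₀.d0, r₀.v0 α <+: r₁.v0 α) ∧ (∀ α ∈ r₀.d1, r₀.v1 α = r₁.v1 α) ∧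
    (r₀.hasStar = true → r₀.star ⊆ r₁.star)
  le_refl r := ⟨Finset.Subset.refl _, Finset.Subset.refl _, fun h => h,
    fun _ _ => List.prefix_refl _, fun _ _ => rfl, fun _ => Finset.Subset.refl _⟩
  le_trans p q r hpq hqr := by
    obtain ⟨ha1, hb1, hs1, hv1, hw1, hx1⟩ := hpq
    obtain ⟨ha2, hb2, hs2, hv2, hw2, hx2⟩ := hqr
    refine ⟨ha2.trans ha1, hb2.trans hb1, fun h => hs1 (hs2 h), ?_, ?_, ?_⟩
    · exact fun α hα => (hv2 α hα).trans (hv1 α (ha2 hα))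
    · exact fun α hα => (hw2 α hα).trans (hw1 α (hb2 hα))
    · exact fun h => (hx2 h).trans (hx1 (hs2 h))
  le_antisymm p q hpq hqp := by
    obtain ⟨ha1, hb1, hs1, hv1, hw1, hx1⟩ := hpq
    obtain ⟨ha2, hb2, hs2, hv2, hw2, hx2⟩ := hqp
    have hd0 : p.d0 = q.d0 := Finset.Subset.antisymm ha2 ha1
    have hd1 : p.d1 = q.d1 := Finset.Subset.antisymm hb2 hb1
    have hstar : p.hasStar = q.hasStar := by
      revert hs1 hs2
      cases p.hasStar <;> cases q.hasStar <;> simp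
    have hv : p.v0 = q.v0 := by
      funext α
      by_cases hα : α ∈ q.d0
      · exact ((hv2 α (hd0 ▸ hα)).eq_of_length
          (Nat.le_antisymm (hv2 α (hd0 ▸ hα)).length_le (hv1 α hα).length_le))
      · rw [p.junk0 α (hd0 ▸ hα), q.junk0 α hα]
    have hw : p.v1 = q.v1 := by
      funext α
      by_cases hα : α ∈ q.d1
      · exact (hw1 α hα).symm
      · rw [p.junk1 α (hd1 ▸ hα), q.junk1 α hα]
    have hst : p.star = q.star := by
      by_cases hq : q.hasStar = true
      · exact Finset.Subset.antisymm (hx2 (hstar ▸ hq)) (hx1 hq)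
      · rw [p.junkStar (by rw [hstar]; exact Bool.not_eq_true _ ▸ (by simpa using hq)),
          q.junkStar (by simpa using hq)]
    exact RCond.ext hd0 hd1 hv hw hstar hst

/-- Membership of `r` (with associated number `n`) in the set `D`. -/
def RCond.InD {ι : Type u} (r : RCond ι) (n : ℕ) : Prop :=
  r.hasStar = true ∧ r.d0 = r.d1 ∧ (∀ α ∈ r.d0, (r.v0 α).length = n) ∧
    (∀ α ∈ r.d0, ∀ β ∈ r.d0, α ≠ β → r.v0 α ≠ r.v0 β) ∧
    (∀ α ∈ r.d1, r.v1 α ≤ n) ∧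
    (∀ σ : List ℕ, (∃ m, (σ, m) ∈ r.star) ↔ ∃ α ∈ r.d0, σ <+: r.v0 α)

/-- The subset `D` of the poset `R`. -/
def RCond.D (ι : Type u) : Set (RCond ι) := {r | ∃ n : ℕ, r.InD n}

/-- The canonical number `n_r` associated to a condition `r ∈ D`. -/
noncomputable def RCond.nOf {ι : Type u} (r : RCond ι) : ℕ :=
  if h : r.d0.Nonempty then (r.v0 h.choose).length else 0

open scoped Classical in
/-- The value of the finite partial function `r (∗)` at `σ`. -/
noncomputable def RCond.starVal {ι : Type u} (r : RCond ι) (σ : List ℕ) : ℕ :=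
  if h : ∃ m, (σ, m) ∈ r.star then h.choose else 0

open scoped Classical in
/-- The projection `Proj : D → P_ed(ω₂)`:  `Proj r` has domain `{α | (α,0) ∈ dom r}`,
`n_{Proj r} = n_r`, and `Proj r α n = r (α,0) n` for `n < r (α,1)` while
`Proj r α n = r ∗ (r (α,0) ↾ (n+1))` for `r (α,1) ≤ n < n_r`. -/
noncomputable def RCond.proj {ι : Type u} (r : RCond ι) : EDCond ι where
  len := r.nOf
  dom := r.d0
  f := fun α i =>
    if α ∈ r.d0 ∧ i < r.nOf then
      (if i < r.v1 α then (r.v0 α).getD i 0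
       else r.starVal ((r.v0 α).take (i + 1)))
    else 0
  junk := by
    intro α i h
    try simp only []
    rw [if_neg]
    rintro ⟨h1, h2⟩
    rcases h with h | h
    · exact h h1
    · omega

/-- The ordinal `ω₂`. -/
noncomputable def omega2 : Ordinal.{0} := (Cardinal.aleph 2).ord

/-- `ω₂` as a set (type) of ordinals. -/
def Omega2T : Type 1 := {o : Ordinal.{0} // o < omega2}

/-!
Extend `r` to a condition of `D` in three moves. Every sequence in `dom (r ∗)` is made an
initial segment of a new sequence `r (β, 0)` at a fresh coordinate `β`, which needs infinitely many
coordinates. All sequences `r (α, 0)` are then right-padded to a common length `L ≥ r (α, 1)`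
and given a distinct last entry, so `n = L + 1` works. Finally `r ∗` is extended to all new initial
segments `σ` by values `encode σ + M` with `M` above the old values, which keeps it injective
on each level.
-/

open scoped Classical

noncomputable section

namespace RCond

variable {ι : Type u} (r : RCond ι)

def support : Finset ι := r.d0 ∪ r.d1

def padLength : ℕ :=
  r.star.sup (fun p => p.1.length) ⊔ r.d0.sup (fun α => (r.v0 α).length) ⊔ r.d1.sup r.v1

lemma length_le_padLength_of_mem_star {σ : List ℕ} {m : ℕ} (h : (σ, m) ∈ r.star) :
    σ.length ≤ r.padLength :=
  le_sup_of_le_left <| le_sup_of_le_left <|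
    Finset.le_sup (f := fun p : List ℕ × ℕ => p.1.length) h

lemma length_v0_le_padLength (α : ι) : (r.v0 α).length ≤ r.padLength := by
  by_cases h : α ∈ r.d0
  · exact le_sup_of_le_left <| le_sup_of_le_right <|
      Finset.le_sup (f := fun α => (r.v0 α).length) h
  · simp [r.junk0 α h]

lemma v1_le_padLength (α : ι) : r.v1 α ≤ r.padLength := by
  by_cases h : α ∈ r.d1
  · exact le_sup_of_le_right (Finset.le_sup h)
  · simp [r.junk1 α h]

def starBound : ℕ := r.star.sup Prod.snd + 1

lemma lt_starBound_of_mem_star {σ : List ℕ} {m : ℕ} (h : (σ, m) ∈ r.star) :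
    m < r.starBound :=
  Nat.lt_succ_of_le (Finset.le_sup (f := Prod.snd) h)

def totalStar (σ : List ℕ) : ℕ :=
  if ∃ m, (σ, m) ∈ r.star then r.starVal σ else Encodable.encode σ + r.starBound

lemma totalStar_of_mem_star {σ : List ℕ} {m : ℕ} (h : (σ, m) ∈ r.star) :
    r.totalStar σ = m := by
  have hσ : ∃ m, (σ, m) ∈ r.star := ⟨m, h⟩
  rw [totalStar, if_pos hσ, starVal, dif_pos hσ]
  exact r.starFun σ _ m hσ.choose_spec h

lemma totalStar_of_not_mem_star {σ : List ℕ} (h : ¬∃ m, (σ, m) ∈ r.star) :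
    r.totalStar σ = Encodable.encode σ + r.starBound :=
  if_neg h

lemma eq_of_totalStar_eq {σ τ : List ℕ} (h : r.totalStar σ = r.totalStar τ)
    (hlen : σ.length = τ.length) : σ = τ := by
  by_cases hσ : ∃ m, (σ, m) ∈ r.star <;> by_cases hτ : ∃ m, (τ, m) ∈ r.star
  · obtain ⟨m, hm⟩ := hσ
    obtain ⟨m', hm'⟩ := hτ
    rw [r.totalStar_of_mem_star hm, r.totalStar_of_mem_star hm'] at h
    exact r.starInj σ τ m hm (h ▸ hm') hlen
  · obtain ⟨m, hm⟩ := hσ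
    have := r.lt_starBound_of_mem_star hm
    rw [r.totalStar_of_mem_star hm, r.totalStar_of_not_mem_star hτ] at h
    omega
  · obtain ⟨m, hm⟩ := hτ
    have := r.lt_starBound_of_mem_star hm
    rw [r.totalStar_of_not_mem_star hσ, r.totalStar_of_mem_star hm] at h
    omega
  · rw [r.totalStar_of_not_mem_star hσ, r.totalStar_of_not_mem_star hτ] at h
    exact Encodable.encode_injective (by omega)

section Extension

variable [Infinite ι]

def fresh (σ : List ℕ) : ι :=
  (Set.toFinite (r.support : Set ι)).infinite_compl.natEmbedding _ (Encodable.encode σ)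

lemma fresh_not_mem_support (σ : List ℕ) : r.fresh σ ∉ r.support :=
  ((Set.toFinite (r.support : Set ι)).infinite_compl.natEmbedding _ (Encodable.encode σ)).2

lemma fresh_injective : Function.Injective r.fresh :=
  Subtype.val_injective.comp <|
    (Function.Embedding.injective _).comp Encodable.encode_injective

def extDom : Finset ι := r.support ∪ r.star.image (fun p => r.fresh p.1)

lemma support_subset_extDom : r.support ⊆ r.extDom := Finset.subset_union_left

lemma fresh_mem_extDom {σ : List ℕ} {m : ℕ} (h : (σ, m) ∈ r.star) : r.fresh σ ∈ r.extDom :=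
  Finset.mem_union_right _ (Finset.mem_image_of_mem _ h)

/-- `r (α, 0)` on old coordinates and `σ` at `fresh σ`, before padding. -/
def extBase : ι → List ℕ := Function.extend r.fresh id r.v0

lemma extBase_fresh (σ : List ℕ) : r.extBase (r.fresh σ) = σ :=
  r.fresh_injective.extend_apply _ _ σ

lemma extBase_of_mem_support {α : ι} (h : α ∈ r.support) : r.extBase α = r.v0 α :=
  Function.extend_apply' _ _ _ (by rintro ⟨σ, rfl⟩; exact r.fresh_not_mem_support σ h)

lemma length_extBase_le {α : ι} (h : α ∈ r.extDom) : (r.extBase α).length ≤ r.padLength := by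
  rcases Finset.mem_union.1 h with h | h
  · rw [r.extBase_of_mem_support h]
    exact r.length_v0_le_padLength α
  · obtain ⟨⟨σ, m⟩, hσ, rfl⟩ := Finset.mem_image.1 h
    rw [r.extBase_fresh]
    exact r.length_le_padLength_of_mem_star hσ

def extSeq (α : ι) : List ℕ :=
  if α ∈ r.extDom then
    (r.extBase α).rightpad r.padLength 0 ++ [r.extDom.toList.idxOf α]
  else []

lemma extSeq_of_mem {α : ι} (h : α ∈ r.extDom) :
    r.extSeq α = (r.extBase α).rightpad r.padLength 0 ++ [r.extDom.toList.idxOf α] :=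
  if_pos h

lemma length_extSeq {α : ι} (h : α ∈ r.extDom) : (r.extSeq α).length = r.padLength + 1 := by
  rw [r.extSeq_of_mem h, List.length_append, List.length_rightpad,
    max_eq_left (r.length_extBase_le h), List.length_singleton]

lemma extBase_prefix_extSeq {α : ι} (h : α ∈ r.extDom) : r.extBase α <+: r.extSeq α := by
  rw [r.extSeq_of_mem h]
  exact (List.prefix_append _ _).trans (List.prefix_append _ _)

lemma extSeq_injOn : Set.InjOn r.extSeq r.extDom := by
  intro α hα β hβ h
  rw [r.extSeq_of_mem hα, r.extSeq_of_mem hβ] at h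
  have := List.append_inj_right' h rfl
  exact (List.idxOf_inj (Finset.mem_toList.2 hα)).1 (List.singleton_inj.1 this)

def extPrefixes : Finset (List ℕ) := r.extDom.biUnion (fun α => (r.extSeq α).inits.toFinset)

lemma mem_extPrefixes {σ : List ℕ} : σ ∈ r.extPrefixes ↔ ∃ α ∈ r.extDom, σ <+: r.extSeq α := by
  simp [extPrefixes, List.mem_inits]

def extStar : Finset (List ℕ × ℕ) := r.extPrefixes.image (fun σ => (σ, r.totalStar σ))

lemma mem_extStar {σ : List ℕ} {m : ℕ} :
    (σ, m) ∈ r.extStar ↔ σ ∈ r.extPrefixes ∧ r.totalStar σ = m := by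
  simp [extStar]

def extendToD : RCond ι where
  d0 := r.extDom
  d1 := r.extDom
  v0 := r.extSeq
  v1 := r.v1
  hasStar := true
  star := r.extStar
  junk0 _ h := if_neg h
  junk1 α h := r.junk1 α fun h' => h (r.support_subset_extDom (Finset.mem_union_right _ h'))
  junkStar h := Bool.noConfusion h
  starFun _ _ _ h h' := ((r.mem_extStar.1 h).2).symm.trans (r.mem_extStar.1 h').2
  starInj _ _ _ h h' :=
    r.eq_of_totalStar_eq ((r.mem_extStar.1 h).2.trans (r.mem_extStar.1 h').2.symm)

theorem extendToD_inD : r.extendToD.InD (r.padLength + 1) := by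
  refine ⟨rfl, rfl, fun _ => r.length_extSeq,
    fun α hα β hβ hne h => hne (r.extSeq_injOn hα hβ h),
    fun α _ => Nat.le_succ_of_le (r.v1_le_padLength α), fun σ => ?_⟩
  show (∃ m, (σ, m) ∈ r.extStar) ↔ ∃ α ∈ r.extDom, σ <+: r.extSeq α
  simp only [r.mem_extStar, exists_and_left, exists_eq', and_true, r.mem_extPrefixes]

theorem extendToD_le : r.extendToD ≤ r := by
  refine ⟨Finset.subset_union_left.trans r.support_subset_extDom,
    Finset.subset_union_right.trans r.support_subset_extDom, fun _ => rfl,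
    fun α hα => ?_, fun _ _ => rfl, fun _ => ?_⟩
  · have hsupp : α ∈ r.support := Finset.mem_union_left _ hα
    show r.v0 α <+: r.extSeq α
    simpa only [r.extBase_of_mem_support hsupp] using
      r.extBase_prefix_extSeq (r.support_subset_extDom hsupp)
  · rintro ⟨σ, m⟩ h
    refine r.mem_extStar.2 ⟨r.mem_extPrefixes.2 ⟨r.fresh σ, r.fresh_mem_extDom h, ?_⟩,
      r.totalStar_of_mem_star h⟩
    simpa only [r.extBase_fresh] using r.extBase_prefix_extSeq (r.fresh_mem_extDom h)

theorem exists_le_mem_D : ∃ r' ∈ D ι, r' ≤ r :=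
  ⟨r.extendToD, ⟨_, r.extendToD_inD⟩, r.extendToD_le⟩

end Extension

end RCond

end

instance : Infinite Omega2T :=
  Infinite.of_injective (fun n : ℕ => (⟨n, (Ordinal.natCast_lt_omega0 n).trans_le <|
      Cardinal.ord_aleph0 ▸ Cardinal.ord_le_ord.2 (Cardinal.aleph0_le_aleph 2)⟩ : Omega2T))
    fun _ _ h => by simpa using congrArg Subtype.val h

theorem stmt14 : ∀ r₀ : RCond Omega2T, ∃ r ∈ RCond.D Omega2T, r ≤ r₀ :=
  fun r₀ => r₀.exists_le_mem_D
end

section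
/- The map Proj : D → P_ed(ω₂) is order-preserving: if r₀ ≥ r₁ in D then Proj(r₀) ≥ Proj(r₁) in P_ed(ω₂). -/
/-!
Below `n_{r₀}` the two projections agree, since `r₁` extends each sequence `r₀(α,0)`, keeps
`r₀(α,1)` and extends `r₀(∗)`. For `n_{r₀} ≤ i < n_{r₁}` we have `r₁(α,1) = r₀(α,1) ≤ n_{r₀} ≤ i`,
so `Proj(r₁)(α)(i) = r₁(∗)(r₁(α,0)↾(i+1))`; as `r₁(∗)` is injective on each level, equal values
force equal segments of length `i + 1 ≥ n_{r₀}`, hence `r₀(α,0) = r₀(β,0)`, so `α = β`.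
-/

universe u v

theorem List.IsPrefix.take_eq_take {α : Type*} {l₁ l₂ : List α} (h : l₁ <+: l₂) {k : ℕ}
    (hk : k ≤ l₁.length) : l₂.take k = l₁.take k := by
  obtain ⟨t, rfl⟩ := h
  exact List.take_append_of_le_length hk

theorem List.IsPrefix.getD_eq {α : Type*} {l₁ l₂ : List α} (h : l₁ <+: l₂) {i : ℕ}
    (hi : i < l₁.length) (d : α) : l₂.getD i d = l₁.getD i d := by
  obtain ⟨t, rfl⟩ := h
  simp only [List.getD_eq_getElem?_getD, List.getElem?_append_left hi]

namespace RCond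

variable {ι : Type u}

theorem starVal_eq_of_mem {r : RCond ι} {σ : List ℕ} {m : ℕ} (h : (σ, m) ∈ r.star) :
    r.starVal σ = m := by
  classical
  have hσ : ∃ m, (σ, m) ∈ r.star := ⟨m, h⟩
  rw [starVal, dif_pos hσ]
  exact r.starFun σ _ m hσ.choose_spec h

theorem eq_of_starVal_eq {r : RCond ι} {σ τ : List ℕ} (hσ : ∃ m, (σ, m) ∈ r.star)
    (hτ : ∃ m, (τ, m) ∈ r.star) (hlen : σ.length = τ.length)
    (h : r.starVal σ = r.starVal τ) : σ = τ := by
  obtain ⟨m, hm⟩ := hσ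
  obtain ⟨m', hm'⟩ := hτ
  rw [starVal_eq_of_mem hm, starVal_eq_of_mem hm'] at h
  exact r.starInj σ τ m hm (h ▸ hm') hlen

theorem InD.nOf_eq {r : RCond ι} {n : ℕ} (h : r.InD n) {α : ι} (hα : α ∈ r.d0) :
    r.nOf = n := by
  have hne : r.d0.Nonempty := ⟨α, hα⟩
  rw [nOf, dif_pos hne]
  exact h.2.2.1 _ hne.choose_spec

theorem proj_f_of_mem {r : RCond ι} {α : ι} {i : ℕ} (hα : α ∈ r.d0) (hi : i < r.nOf) :
    r.proj.f α i =
      if i < r.v1 α then (r.v0 α).getD i 0 else r.starVal ((r.v0 α).take (i + 1)) := by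
  simp only [proj]
  rw [if_pos ⟨hα, hi⟩]

theorem nOf_le_nOf_of_le {r₀ r₁ : RCond ι} {n₀ n₁ : ℕ} (h₀ : r₀.InD n₀) (h₁ : r₁.InD n₁)
    (hle : r₁ ≤ r₀) : r₀.nOf ≤ r₁.nOf := by
  rcases r₀.d0.eq_empty_or_nonempty with hempty | ⟨α, hα⟩
  · simp [nOf, hempty]
  · rw [h₀.nOf_eq hα, h₁.nOf_eq (hle.1 hα), ← h₀.2.2.1 α hα, ← h₁.2.2.1 α (hle.1 hα)]
    exact (hle.2.2.2.1 α hα).length_le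

theorem proj_f_eq_of_le {r₀ r₁ : RCond ι} {n₀ n₁ : ℕ} (h₀ : r₀.InD n₀) (h₁ : r₁.InD n₁)
    (hle : r₁ ≤ r₀) {α : ι} (hα : α ∈ r₀.d0) {i : ℕ} (hi : i < r₀.nOf) :
    r₁.proj.f α i = r₀.proj.f α i := by
  have hi₁ : i < r₁.nOf := hi.trans_le (nOf_le_nOf_of_le h₀ h₁ hle)
  have hn₀ : r₀.nOf = n₀ := h₀.nOf_eq hα
  obtain ⟨hstar₀, hd₀, hlen₀, -, -, hdom₀⟩ := h₀
  obtain ⟨hd0, -, -, hpre, hv1, hstar⟩ := hle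
  have hiα : i < (r₀.v0 α).length := by rw [hlen₀ α hα, ← hn₀]; exact hi
  rw [proj_f_of_mem (hd0 hα) hi₁, proj_f_of_mem hα hi, ← hv1 α (hd₀ ▸ hα),
    (hpre α hα).getD_eq hiα, (hpre α hα).take_eq_take hiα]
  congr 1
  obtain ⟨m, hm⟩ := (hdom₀ _).2 ⟨α, hα, List.take_prefix _ _⟩
  rw [starVal_eq_of_mem hm, starVal_eq_of_mem (hstar hstar₀ hm)]

theorem proj_f_ne_of_le {r₀ r₁ : RCond ι} {n₀ n₁ : ℕ} (h₀ : r₀.InD n₀) (h₁ : r₁.InD n₁)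
    (hle : r₁ ≤ r₀) {i : ℕ} (hi₀ : r₀.nOf ≤ i) (hi₁ : i < r₁.nOf) {α β : ι}
    (hα : α ∈ r₀.d0) (hβ : β ∈ r₀.d0) (hαβ : α ≠ β) :
    r₁.proj.f α i ≠ r₁.proj.f β i := by
  have hn₀ : ∀ γ ∈ r₀.d0, r₀.nOf = n₀ := fun _ => h₀.nOf_eq
  have hn₁ : ∀ γ ∈ r₁.d0, r₁.nOf = n₁ := fun _ => h₁.nOf_eq
  obtain ⟨-, hd₀, hlen₀, hinj₀, hv1₀, -⟩ := h₀
  obtain ⟨-, -, hlen₁, -, -, hdom₁⟩ := h₁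
  obtain ⟨hd0, -, -, hpre, hv1, -⟩ := hle
  have hstarVal : ∀ γ ∈ r₀.d0, r₁.proj.f γ i = r₁.starVal ((r₁.v0 γ).take (i + 1)) := by
    intro γ hγ
    have hv1γ : r₁.v1 γ ≤ i := calc
      r₁.v1 γ = r₀.v1 γ := (hv1 γ (hd₀ ▸ hγ)).symm
      _ ≤ n₀ := hv1₀ γ (hd₀ ▸ hγ)
      _ ≤ i := hn₀ γ hγ ▸ hi₀
    rw [proj_f_of_mem (hd0 hγ) hi₁, if_neg hv1γ.not_gt]
  have htake_len : ∀ γ ∈ r₀.d0, ((r₁.v0 γ).take (i + 1)).length = i + 1 := fun γ hγ => by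
    rw [List.length_take, hlen₁ γ (hd0 hγ), ← hn₁ γ (hd0 hγ)]
    omega
  have hpre_take : ∀ γ ∈ r₀.d0, r₀.v0 γ <+: (r₁.v0 γ).take (i + 1) := fun γ hγ =>
    List.prefix_take_iff.2 ⟨hpre γ hγ, by rw [hlen₀ γ hγ, ← hn₀ γ hγ]; omega⟩
  rw [hstarVal α hα, hstarVal β hβ]
  intro heq
  have htake := eq_of_starVal_eq ((hdom₁ _).2 ⟨α, hd0 hα, List.take_prefix _ _⟩)
    ((hdom₁ _).2 ⟨β, hd0 hβ, List.take_prefix _ _⟩)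
    (by rw [htake_len α hα, htake_len β hβ]) heq
  have hlen : (r₀.v0 α).length = (r₀.v0 β).length := by rw [hlen₀ α hα, hlen₀ β hβ]
  have hpre_αβ : r₀.v0 α <+: r₀.v0 β :=
    List.prefix_of_prefix_length_le (hpre_take α hα) (htake ▸ hpre_take β hβ) hlen.le
  exact hinj₀ α hα β hβ hαβ (hpre_αβ.eq_of_length hlen)

end RCond

theorem stmt15 : ∀ r₀ ∈ RCond.D Omega2T, ∀ r₁ ∈ RCond.D Omega2T, r₁ ≤ r₀ →
    RCond.proj r₁ ≤ RCond.proj r₀ := by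
  rintro r₀ ⟨n₀, h₀⟩ r₁ ⟨n₁, h₁⟩ hle
  exact ⟨hle.1, RCond.nOf_le_nOf_of_le h₀ h₁ hle,
    fun α hα i hi => RCond.proj_f_eq_of_le h₀ h₁ hle hα hi,
    fun i hi₀ hi₁ α hα β hβ hαβ => RCond.proj_f_ne_of_le h₀ h₁ hle hi₀ hi₁ hα hβ hαβ⟩
end
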